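/- arXiv:math/0606225 — 4 statements merged into one kernel-verified Lean document; each statement's English description precedes it below -/
import Mathlib

section
/- Let M be a II₁ factor with faithful tracial state τ and let A ⊆ N ⊆ M be von Neumann subalgebras whose τ-preserving conditional expectations E_A and E_N exist. If the triple A ⊆ N ⊆ M satisfies the relative weak asymptotic homomorphism property, then N_M(A)'' ⊆ N; in particular every unitary u ∈ M with uAu* = A belongs to N. -/
open scoped ComplexOrder

noncomputable section

variable {H : Type*} [NormedAddCommGroup H] [InnerProductSpace ℂ H] [CompleteSpace H]

/-- The von Neumann algebra generated by a set of bounded operators `S`: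
the double commutant of `S ∪ S*`. -/
def vNgen (S : Set (H →L[ℂ] H)) : Set (H →L[ℂ] H) :=
  Set.centralizer (Set.centralizer (S ∪ star '' S))

/-- `M` is a von Neumann algebra acting on `H`: a unital *-subalgebra of `B(H)`
equal to its double commutant. -/
structure IsVonNeumannAlgebra (M : Set (H →L[ℂ] H)) : Prop where
  one_mem : (1 : H →L[ℂ] H) ∈ M
  add_mem : ∀ x ∈ M, ∀ y ∈ M, x + y ∈ M
  mul_mem : ∀ x ∈ M, ∀ y ∈ M, x * y ∈ M
  smul_mem : ∀ (c : ℂ), ∀ x ∈ M, c • x ∈ M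
  star_mem : ∀ x ∈ M, star x ∈ M
  double_commutant : Set.centralizer (Set.centralizer M) = M

/-- `τ` is a faithful tracial state on `M`. -/
structure IsFaithfulTracialState (M : Set (H →L[ℂ] H)) (τ : (H →L[ℂ] H) → ℂ) : Prop where
  map_add : ∀ x ∈ M, ∀ y ∈ M, τ (x + y) = τ x + τ y
  map_smul : ∀ (c : ℂ), ∀ x ∈ M, τ (c • x) = c * τ x
  map_one : τ 1 = 1
  nonneg : ∀ x ∈ M, 0 ≤ τ (star x * x)
  tracial : ∀ x ∈ M, ∀ y ∈ M, τ (x * y) = τ (y * x)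
  faithful : ∀ x ∈ M, τ (star x * x) = 0 → x = 0

/-- `M` is infinite dimensional: it is not contained in the span of finitely many operators. -/
def IsInfiniteDimensionalSet (M : Set (H →L[ℂ] H)) : Prop :=
  ∀ s : Finset (H →L[ℂ] H),
    ¬ (M ⊆ (Submodule.span ℂ (s : Set (H →L[ℂ] H)) : Set (H →L[ℂ] H)))

/-- `M` is a factor: its center consists of scalar multiples of the identity. -/
def IsFactor (M : Set (H →L[ℂ] H)) : Prop :=
  ∀ x ∈ M, (∀ y ∈ M, x * y = y * x) → ∃ c : ℂ, x = c • (1 : H →L[ℂ] H)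

/-- `M` is a II₁ factor with faithful tracial state `τ`. -/
structure IsII1Factor (M : Set (H →L[ℂ] H)) (τ : (H →L[ℂ] H) → ℂ) : Prop where
  vna : IsVonNeumannAlgebra M
  factor : IsFactor M
  infdim : IsInfiniteDimensionalSet M
  trace : IsFaithfulTracialState M τ

/-- The 2-norm `‖x‖₂ = τ(x*x)^{1/2}` associated to the trace `τ`. -/
def norm2 (τ : (H →L[ℂ] H) → ℂ) (x : H →L[ℂ] H) : ℝ :=
  Real.sqrt (τ (star x * x)).re

/-- `E` is the `τ`-preserving conditional expectation of `M` onto `B`. -/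
def IsCondExp (M B : Set (H →L[ℂ] H)) (τ : (H →L[ℂ] H) → ℂ)
    (E : (H →L[ℂ] H) → (H →L[ℂ] H)) : Prop :=
  (∀ x ∈ M, E x ∈ B) ∧ (∀ x ∈ M, ∀ b ∈ B, τ ((x - E x) * b) = 0)

/-- `A` is a maximal abelian *-subalgebra (MASA) of `M`. -/
def IsMasa (M A : Set (H →L[ℂ] H)) : Prop :=
  A ⊆ M ∧ (∀ a ∈ A, star a ∈ A) ∧ {x ∈ M | ∀ a ∈ A, x * a = a * x} = A

/-- `u` is a unitary operator. -/
def IsUnitary (u : H →L[ℂ] H) : Prop :=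
  star u * u = 1 ∧ u * star u = 1

/-- The set of normalizing unitaries of `A` in `M`: unitaries `u ∈ M` with `uAu* = A`. -/
def normalizerSet (M A : Set (H →L[ℂ] H)) : Set (H →L[ℂ] H) :=
  {u | u ∈ M ∧ IsUnitary u ∧ (fun a => u * a * star u) '' A = A}

/-- The normalizing algebra `N_M(A)''` of `A` in `M`. -/
def normAlg (M A : Set (H →L[ℂ] H)) : Set (H →L[ℂ] H) :=
  vNgen (normalizerSet M A)

/-- The triple `B ⊆ N ⊆ M` satisfies the relative weak asymptotic homomorphism property
relative to the trace `τ` and the conditional expectations `EB` and `EN`. -/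
def RelWAHP (M N B : Set (H →L[ℂ] H)) (τ : (H →L[ℂ] H) → ℂ)
    (EB EN : (H →L[ℂ] H) → (H →L[ℂ] H)) : Prop :=
  ∀ (n : ℕ) (x : Fin n → (H →L[ℂ] H)), (∀ i, x i ∈ M) →
    ∀ ε : ℝ, 0 < ε → ∃ u ∈ B, IsUnitary u ∧
      ∀ i j, norm2 τ (EB (x i * u * x j) - EB (EN (x i) * u * EN (x j))) < ε

namespace Hlp

variable {M : Set (H →L[ℂ] H)} {τ : (H →L[ℂ] H) → ℂ}

lemma sub_mem (hM : IsVonNeumannAlgebra M) {x y : H →L[ℂ] H} (hx : x ∈ M) (hy : y ∈ M) :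
    x - y ∈ M := by
  have : x - y = x + (-1 : ℂ) • y := by
    rw [neg_one_smul, sub_eq_add_neg]
  rw [this]
  exact hM.add_mem x hx _ (hM.smul_mem (-1) y hy)

lemma map_zero (hM : IsVonNeumannAlgebra M) (hτ : IsFaithfulTracialState M τ) : τ 0 = 0 := by
  have := hτ.map_smul 0 1 hM.one_mem
  simpa using this

lemma map_sub (hM : IsVonNeumannAlgebra M) (hτ : IsFaithfulTracialState M τ)
    {x y : H →L[ℂ] H} (hx : x ∈ M) (hy : y ∈ M) : τ (x - y) = τ x - τ y := by
  have h1 : τ ((x - y) + y) = τ (x - y) + τ y := hτ.map_add _ (sub_mem hM hx hy) _ hy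
  rw [sub_add_cancel] at h1
  rw [h1]; ring

lemma re_nonneg (hτ : IsFaithfulTracialState M τ) {x : H →L[ℂ] H} (hx : x ∈ M) :
    0 ≤ (τ (star x * x)).re := ((Complex.nonneg_iff).1 (hτ.nonneg x hx)).1

lemma im_zero (hτ : IsFaithfulTracialState M τ) {x : H →L[ℂ] H} (hx : x ∈ M) :
    (τ (star x * x)).im = 0 := ((Complex.nonneg_iff).1 (hτ.nonneg x hx)).2.symm

lemma sa_real (hM : IsVonNeumannAlgebra M) (hτ : IsFaithfulTracialState M τ)
    {h : H →L[ℂ] H} (hh : h ∈ M) (hsa : star h = h) : (τ h).im = 0 := by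
  have h1M : (1 : H →L[ℂ] H) + h ∈ M := hM.add_mem _ hM.one_mem _ hh
  have hhh : h * h ∈ M := hM.mul_mem _ hh _ hh
  have expand : star ((1 : H →L[ℂ] H) + h) * (1 + h) = 1 + (h + (h + h * h)) := by
    rw [star_add, star_one, hsa]; noncomm_ring
  have e1 : τ (star ((1 : H →L[ℂ] H) + h) * (1 + h)) = 1 + (τ h + (τ h + τ (h * h))) := by
    rw [expand, hτ.map_add _ hM.one_mem _ (hM.add_mem _ hh _ (hM.add_mem _ hh _ hhh)),
      hτ.map_add _ hh _ (hM.add_mem _ hh _ hhh), hτ.map_add _ hh _ hhh, hτ.map_one]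
  have e2 : (τ (star ((1 : H →L[ℂ] H) + h) * (1 + h))).im = 0 := im_zero hτ h1M
  have e3 : (τ (h * h)).im = 0 := by
    have : star h * h = h * h := by rw [hsa]
    have := im_zero hτ hh
    rw [hsa] at this; exact this
  rw [e1] at e2
  simp [Complex.add_im, e3] at e2
  linarith

lemma map_star (hM : IsVonNeumannAlgebra M) (hτ : IsFaithfulTracialState M τ)
    {x : H →L[ℂ] H} (hx : x ∈ M) : τ (star x) = starRingEnd ℂ (τ x) := by
  set h : H →L[ℂ] H := x + star x with hh_def
  set k : H →L[ℂ] H := (-Complex.I) • (x - star x) with hk_def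
  have hxM : star x ∈ M := hM.star_mem x hx
  have hhM : h ∈ M := hM.add_mem _ hx _ hxM
  have hkM : k ∈ M := hM.smul_mem _ _ (sub_mem hM hx hxM)
  have hsa : star h = h := by rw [hh_def, star_add, star_star, add_comm]
  have ksa : star k = k := by
    rw [hk_def, star_smul, star_sub, star_star]
    rw [show star (-Complex.I) = Complex.I by simp]
    conv_rhs => rw [neg_smul, ← smul_neg, neg_sub]
  have hre : (τ h).im = 0 := sa_real hM hτ hhM hsa
  have kre : (τ k).im = 0 := sa_real hM hτ hkM ksa
  have e1 : τ x + τ (star x) = τ h := (hτ.map_add _ hx _ hxM).symm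
  have e2 : τ x - τ (star x) = Complex.I * τ k := by
    have : x - star x = Complex.I • k := by
      rw [hk_def, smul_smul]
      simp
    rw [← map_sub hM hτ hx hxM, this, hτ.map_smul _ _ hkM]
  have ch : starRingEnd ℂ (τ h) = τ h := Complex.conj_eq_iff_im.2 hre
  have ck : starRingEnd ℂ (τ k) = τ k := Complex.conj_eq_iff_im.2 kre
  have hx2 : τ x = (τ h + Complex.I * τ k) / 2 := by linear_combination (e1 + e2) / 2
  have hsx2 : τ (star x) = (τ h - Complex.I * τ k) / 2 := by linear_combination (e1 - e2) / 2
  rw [hx2, hsx2]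
  rw [map_div₀, map_add, map_mul, Complex.conj_I, ch, ck]
  rw [show ((starRingEnd ℂ) 2 : ℂ) = 2 from Complex.conj_ofNat 2]
  ring


lemma real_eq (hτ : IsFaithfulTracialState M τ) {x : H →L[ℂ] H} (hx : x ∈ M) :
    τ (star x * x) = (((τ (star x * x)).re : ℝ) : ℂ) :=
  Complex.ext (by simp) (by simp [im_zero hτ hx])

/-- Cauchy–Schwarz for the trace. -/
lemma cs (hM : IsVonNeumannAlgebra M) (hτ : IsFaithfulTracialState M τ)
    {x y : H →L[ℂ] H} (hx : x ∈ M) (hy : y ∈ M) :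
    ‖τ (star y * x)‖ ≤ Real.sqrt (τ (star x * x)).re * Real.sqrt (τ (star y * y)).re := by
  set A := (τ (star x * x)).re with hA
  set B := (τ (star y * y)).re with hB
  have hA0 : 0 ≤ A := re_nonneg hτ hx
  have hB0 : 0 ≤ B := re_nonneg hτ hy
  by_cases hy0 : τ (star y * y) = 0
  · have : y = 0 := hτ.faithful y hy hy0
    subst this
    rw [show star (0 : H →L[ℂ] H) * x = 0 by simp, map_zero hM hτ]
    simp
    positivity
  · have hBpos : 0 < B := by
      rcases lt_or_eq_of_le hB0 with h | h
      · exact h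
      · exact absurd ((real_eq hτ hy).trans (by rw [← hB, ← h]; simp)) hy0
    have hsx : star x ∈ M := hM.star_mem x hx
    have hsy : star y ∈ M := hM.star_mem y hy
    have hxx : star x * x ∈ M := hM.mul_mem _ hsx _ hx
    have hyy : star y * y ∈ M := hM.mul_mem _ hsy _ hy
    have hxy : star x * y ∈ M := hM.mul_mem _ hsx _ hy
    have hyx : star y * x ∈ M := hM.mul_mem _ hsy _ hx
    set q : H →L[ℂ] H := ((B : ℝ) : ℂ) • x - τ (star y * x) • y with hq
    have hqM : q ∈ M := sub_mem hM (hM.smul_mem _ _ hx) (hM.smul_mem _ _ hy)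
    have expand : star q * q =
        (star ((B : ℝ) : ℂ) * ((B : ℝ) : ℂ)) • (star x * x) -
          ((star ((B : ℝ) : ℂ) * τ (star y * x)) • (star x * y) +
            ((star (τ (star y * x)) * ((B : ℝ) : ℂ)) • (star y * x) -
              (star (τ (star y * x)) * τ (star y * x)) • (star y * y))) := by
      rw [hq, star_sub, star_smul, star_smul]
      simp only [sub_mul, mul_sub, smul_mul_assoc, mul_smul_comm, smul_smul, smul_add, smul_sub]
      module
    have hτq : τ (star q * q) =
        (star ((B : ℝ) : ℂ) * ((B : ℝ) : ℂ)) * τ (star x * x) -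
          ((star ((B : ℝ) : ℂ) * τ (star y * x)) * τ (star x * y) +
            ((star (τ (star y * x)) * ((B : ℝ) : ℂ)) * τ (star y * x) -
              (star (τ (star y * x)) * τ (star y * x)) * τ (star y * y))) := by
      rw [expand, map_sub hM hτ (hM.smul_mem _ _ hxx)
        (hM.add_mem _ (hM.smul_mem _ _ hxy) _ (sub_mem hM (hM.smul_mem _ _ hyx) (hM.smul_mem _ _ hyy))),
        hτ.map_add _ (hM.smul_mem _ _ hxy) _ (sub_mem hM (hM.smul_mem _ _ hyx) (hM.smul_mem _ _ hyy)),
        map_sub hM hτ (hM.smul_mem _ _ hyx) (hM.smul_mem _ _ hyy),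
        hτ.map_smul _ _ hxx, hτ.map_smul _ _ hxy, hτ.map_smul _ _ hyx, hτ.map_smul _ _ hyy]
    have hconj : τ (star x * y) = starRingEnd ℂ (τ (star y * x)) := by
      have h1 : star (star y * x) = star x * y := by rw [star_mul, star_star]
      rw [← h1, map_star hM hτ hyx]
    have hyyB : τ (star y * y) = ((B : ℝ) : ℂ) := real_eq hτ hy
    have hval : τ (star q * q) =
        ((B^2 : ℝ) : ℂ) * τ (star x * x) - (((B * Complex.normSq (τ (star y * x)) : ℝ)) : ℂ) := by
      rw [hτq, hconj, hyyB]
      simp only [Complex.star_def, Complex.conj_ofReal]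
      linear_combination (norm := (push_cast; ring1))
        (-(B:ℂ)) * Complex.mul_conj (τ (star y * x))
    have hP : 0 ≤ (τ (star q * q)).re := re_nonneg hτ hqM
    rw [hval] at hP
    rw [Complex.sub_re, Complex.re_ofReal_mul, Complex.ofReal_re, ← hA] at hP
    have hns : Complex.normSq (τ (star y * x)) ≤ A * B := by
      nlinarith [Complex.normSq_nonneg (τ (star y * x))]
    have h1 : ‖τ (star y * x)‖^2 = Complex.normSq (τ (star y * x)) := by
      rw [Complex.sq_norm]
    calc ‖τ (star y * x)‖ = Real.sqrt (‖τ (star y * x)‖^2) :=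
        (Real.sqrt_sq (norm_nonneg _)).symm
      _ ≤ Real.sqrt (A * B) := Real.sqrt_le_sqrt (by rw [h1]; exact hns)
      _ = Real.sqrt A * Real.sqrt B := Real.sqrt_mul hA0 B


variable {B : Set (H →L[ℂ] H)} {E : (H →L[ℂ] H) → (H →L[ℂ] H)}

lemma condexp_unique (hM : IsVonNeumannAlgebra M) (hτ : IsFaithfulTracialState M τ)
    (hB : IsVonNeumannAlgebra B) (hBM : B ⊆ M) (hE : IsCondExp M B τ E)
    {x e : H →L[ℂ] H} (hx : x ∈ M) (he : e ∈ B)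
    (horth : ∀ b ∈ B, τ ((x - e) * b) = 0) : E x = e := by
  set g : H →L[ℂ] H := E x - e with hg
  have hgB : g ∈ B := sub_mem hB (hE.1 x hx) he
  have hgM : g ∈ M := hBM hgB
  have hgb : ∀ b ∈ B, τ (g * b) = 0 := by
    intro b hb
    have hbM : b ∈ M := hBM hb
    have h1 : τ ((x - e) * b) = 0 := horth b hb
    have h2 : τ ((x - E x) * b) = 0 := hE.2 x hx b hb
    have h3 : (x - e) * b - (x - E x) * b = g * b := by rw [hg]; noncomm_ring
    have h4 : τ ((x - e) * b - (x - E x) * b) = 0 := by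
      rw [map_sub hM hτ (hM.mul_mem _ (sub_mem hM hx (hBM he)) _ hbM)
        (hM.mul_mem _ (sub_mem hM hx (hBM (hE.1 x hx))) _ hbM), h1, h2, sub_zero]
    rw [← h3, h4]
  have h5 : τ (g * star g) = 0 := hgb (star g) (hB.star_mem g hgB)
  have h6 : τ (star (star g) * star g) = 0 := by rw [star_star]; exact h5
  have h7 : star g = 0 := hτ.faithful (star g) (hM.star_mem g hgM) h6
  have h8 : g = 0 := by rw [← star_star g, h7, star_zero]
  have := sub_eq_zero.1 (hg ▸ h8)
  exact this

lemma condexp_of_mem (hM : IsVonNeumannAlgebra M) (hτ : IsFaithfulTracialState M τ)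
    (hB : IsVonNeumannAlgebra B) (hBM : B ⊆ M) (hE : IsCondExp M B τ E)
    {x : H →L[ℂ] H} (hx : x ∈ B) : E x = x := by
  refine condexp_unique hM hτ hB hBM hE (hBM hx) hx ?_
  intro b hb
  rw [sub_self, zero_mul, map_zero hM hτ]

lemma condexp_star (hM : IsVonNeumannAlgebra M) (hτ : IsFaithfulTracialState M τ)
    (hB : IsVonNeumannAlgebra B) (hBM : B ⊆ M) (hE : IsCondExp M B τ E)
    {x : H →L[ℂ] H} (hx : x ∈ M) : E (star x) = star (E x) := by
  refine condexp_unique hM hτ hB hBM hE (hM.star_mem x hx) (hB.star_mem _ (hE.1 x hx)) ?_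
  intro b hb
  have haM : x - E x ∈ M := sub_mem hM hx (hBM (hE.1 x hx))
  have hbM : b ∈ M := hBM hb
  have h1 : star x - star (E x) = star (x - E x) := (star_sub x (E x)).symm
  rw [h1]
  have h2 : star (x - E x) * b = star (star b * (x - E x)) := by rw [star_mul, star_star]
  rw [h2, map_star hM hτ (hM.mul_mem _ (hM.star_mem _ hbM) _ haM)]
  have h3 : τ (star b * (x - E x)) = τ ((x - E x) * star b) := hτ.tracial _ (hM.star_mem _ hbM) _ haM
  rw [h3, hE.2 x hx (star b) (hB.star_mem b hb)]
  simp

/-- Pythagoras: `τ(x*x) = τ((x-Ex)*(x-Ex)) + τ((Ex)*(Ex))`. -/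
lemma condexp_pythagoras (hM : IsVonNeumannAlgebra M) (hτ : IsFaithfulTracialState M τ)
    (hB : IsVonNeumannAlgebra B) (hBM : B ⊆ M) (hE : IsCondExp M B τ E)
    {x : H →L[ℂ] H} (hx : x ∈ M) :
    τ (star x * x) = τ (star (x - E x) * (x - E x)) + τ (star (E x) * E x) := by
  set a : H →L[ℂ] H := x - E x with ha
  set b : H →L[ℂ] H := E x with hb
  have hbB : b ∈ B := hE.1 x hx
  have hbM : b ∈ M := hBM hbB
  have haM : a ∈ M := sub_mem hM hx hbM
  have hx' : x = a + b := by rw [ha, hb, sub_add_cancel]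
  have cross1 : τ (star b * a) = 0 := by
    rw [hτ.tracial _ (hM.star_mem _ hbM) _ haM]
    exact hE.2 x hx (star b) (hB.star_mem b hbB)
  have cross2 : τ (star a * b) = 0 := by
    have h2 : star a * b = star (star b * a) := by rw [star_mul, star_star]
    rw [h2, map_star hM hτ (hM.mul_mem _ (hM.star_mem _ hbM) _ haM), cross1]
    simp
  have expand : star x * x = (star a * a + star a * b) + (star b * a + star b * b) := by
    rw [hx', star_add]; noncomm_ring
  rw [expand,
    hτ.map_add _ (hM.add_mem _ (hM.mul_mem _ (hM.star_mem _ haM) _ haM) _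
        (hM.mul_mem _ (hM.star_mem _ haM) _ hbM)) _
      (hM.add_mem _ (hM.mul_mem _ (hM.star_mem _ hbM) _ haM) _
        (hM.mul_mem _ (hM.star_mem _ hbM) _ hbM)),
    hτ.map_add _ (hM.mul_mem _ (hM.star_mem _ haM) _ haM) _ (hM.mul_mem _ (hM.star_mem _ haM) _ hbM),
    hτ.map_add _ (hM.mul_mem _ (hM.star_mem _ hbM) _ haM) _ (hM.mul_mem _ (hM.star_mem _ hbM) _ hbM),
    cross1, cross2]
  ring

end Hlp

/-- If the triple `A ⊆ N ⊆ M` satisfies the relative WAHP, then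
`N_M(A)'' ⊆ N`; in particular every unitary `u ∈ M` with `uAu* = A` belongs to `N`. -/
theorem relative_WAHP_implies_normalizer_contained
    {H : Type*} [NormedAddCommGroup H] [InnerProductSpace ℂ H] [CompleteSpace H]
    (M N A : Set (H →L[ℂ] H)) (τ : (H →L[ℂ] H) → ℂ)
    (EA EN : (H →L[ℂ] H) → (H →L[ℂ] H))
    (hM : IsII1Factor M τ)
    (hA : IsVonNeumannAlgebra A) (hN : IsVonNeumannAlgebra N)
    (hAN : A ⊆ N) (hNM : N ⊆ M)
    (hEA : IsCondExp M A τ EA) (hEN : IsCondExp M N τ EN)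
    (hwahp : RelWAHP M N A τ EA EN) :
    normAlg M A ⊆ N ∧
      ∀ u ∈ M, IsUnitary u → (fun a => u * a * star u) '' A = A → u ∈ N := by

  obtain ⟨hMvna, _, _, hτ⟩ := hM
  have hAM : A ⊆ M := fun x hx => hNM (hAN hx)
  have part2 : ∀ u ∈ M, IsUnitary u → (fun a => u * a * star u) '' A = A → u ∈ N := by
    intro u huM huu huA
    have hEu : EN u ∈ N := hEN.1 u huM
    have hEuM : EN u ∈ M := hNM hEu
    have haM : u - EN u ∈ M := Hlp.sub_mem hMvna huM hEuM
    set F : ℝ := (τ (star (EN u) * EN u)).re with hFdef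
    have hF0 : 0 ≤ F := Hlp.re_nonneg hτ hEuM
    have key : ∀ ε : ℝ, 0 < ε → (1:ℝ) < ε + F := by
      intro ε hε
      obtain ⟨v, hvA, hv, hineq⟩ := hwahp 2 ![u, star u] (by
        intro i
        fin_cases i
        · simpa using huM
        · simpa using hMvna.star_mem u huM) ε hε
      have hvN : v ∈ N := hAN hvA
      have hvM : v ∈ M := hNM hvN
      have h01 := hineq 0 1
      simp only [Matrix.cons_val_zero, Matrix.cons_val_one, Matrix.head_cons] at h01
      set w : H →L[ℂ] H := u * v * star u with hw
      have hwA : w ∈ A := by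
        rw [← huA]; exact ⟨v, hvA, rfl⟩
      have hwM : w ∈ M := hAM hwA
      have hswM : star w ∈ M := hMvna.star_mem w hwM
      have hEAw : EA w = w := Hlp.condexp_of_mem hMvna hτ hA hAM hEA hwA
      set Z : H →L[ℂ] H := EN u * v * EN (star u) with hZ
      have hZM : Z ∈ M := hMvna.mul_mem _ (hMvna.mul_mem _ hEuM _ hvM) _
        (hNM (hEN.1 _ (hMvna.star_mem u huM)))
      rw [hEAw] at h01
      set d : H →L[ℂ] H := w - EA Z with hd
      have hEAZA : EA Z ∈ A := hEA.1 Z hZM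
      have hEAZM : EA Z ∈ M := hAM hEAZA
      have hdM : d ∈ M := Hlp.sub_mem hMvna hwM hEAZM
      have hwu : star w * w = 1 := by
        have h1 : star w * w = u * (star v * ((star u * u) * (v * star u))) := by
          rw [hw]; simp only [star_mul, star_star, mul_assoc]
        rw [h1, huu.1, one_mul, ← mul_assoc (star v) v, hv.1, one_mul, huu.2]
      have e0 : τ (star w * w) = 1 := by rw [hwu, hτ.map_one]
      have step2 : τ (EA Z * star w) = τ (Z * star w) := by
        have t2 : τ ((Z - EA Z) * star w) = 0 := hEA.2 Z hZM (star w) (hA.star_mem w hwA)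
        have t3 : τ ((Z - EA Z) * star w) = τ (Z * star w) - τ (EA Z * star w) := by
          rw [show (Z - EA Z) * star w = Z * star w - EA Z * star w from by noncomm_ring,
            Hlp.map_sub hMvna hτ (hMvna.mul_mem _ hZM _ hswM) (hMvna.mul_mem _ hEAZM _ hswM)]
        have t4 : τ (Z * star w) - τ (EA Z * star w) = 0 := by rw [← t3]; exact t2
        exact (sub_eq_zero.1 t4).symm
      have e1 : τ (star w * d) + τ (Z * star w) = 1 := by
        have hsplit0 : star w * d + star w * EA Z = star w * w := by
          rw [hd, mul_sub, sub_add_cancel]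
        have t5 : τ (star w * EA Z) = τ (EA Z * star w) := hτ.tracial _ hswM _ hEAZM
        rw [← step2, ← t5,
          ← hτ.map_add _ (hMvna.mul_mem _ hswM _ hdM) _ (hMvna.mul_mem _ hswM _ hEAZM),
          hsplit0, e0]
      have e2 : (τ (star w * d)).re + (τ (Z * star w)).re = 1 := by
        have := congrArg Complex.re e1
        simpa using this
      have b1 : (τ (star w * d)).re < ε := by
        calc (τ (star w * d)).re ≤ ‖τ (star w * d)‖ := by
              exact Complex.re_le_norm _
          _ ≤ Real.sqrt (τ (star d * d)).re * Real.sqrt (τ (star w * w)).re :=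
              Hlp.cs hMvna hτ hdM hwM
          _ = norm2 τ d := by rw [e0]; simp [norm2]
          _ < ε := h01
      -- second bound
      have hesM : EN (star u) ∈ M := hNM (hEN.1 _ (hMvna.star_mem u huM))
      have hes : EN (star u) = star (EN u) := Hlp.condexp_star hMvna hτ hN hNM hEN huM
      set y1 : H →L[ℂ] H := star (EN u) with hy1
      set x1 : H →L[ℂ] H := v * EN (star u) * star w with hx1
      have hy1M : y1 ∈ M := hMvna.star_mem _ hEuM
      have hx1M : x1 ∈ M := hMvna.mul_mem _ (hMvna.mul_mem _ hvM _ hesM) _ hswM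
      have hZw : Z * star w = star y1 * x1 := by
        rw [hZ, hx1, hy1, star_star]; simp only [mul_assoc]
      have fy : τ (star y1 * y1) = τ (star (EN u) * EN u) := by
        rw [hy1, star_star]
        exact hτ.tracial _ hEuM _ (hMvna.star_mem _ hEuM)
      have fx : τ (star x1 * x1) = τ (star (EN u) * EN u) := by
        have hx1e : star x1 * x1 = w * (star (EN (star u)) * ((star v * v) * (EN (star u) * star w))) := by
          rw [hx1]; simp only [star_mul, star_star, mul_assoc]
        rw [hx1e, hv.1, one_mul]
        have t6 : τ (w * (star (EN (star u)) * (EN (star u) * star w)))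
            = τ ((star (EN (star u)) * (EN (star u) * star w)) * w) :=
          hτ.tracial _ hwM _ (hMvna.mul_mem _ (hMvna.star_mem _ hesM) _
            (hMvna.mul_mem _ hesM _ hswM))
        rw [t6, show (star (EN (star u)) * (EN (star u) * star w)) * w
            = star (EN (star u)) * (EN (star u) * (star w * w)) from by simp only [mul_assoc],
          hwu, mul_one, hes, star_star]
        exact hτ.tracial _ hEuM _ (hMvna.star_mem _ hEuM)
      have b2 : (τ (Z * star w)).re ≤ F := by
        calc (τ (Z * star w)).re ≤ ‖τ (Z * star w)‖ := by
              exact Complex.re_le_norm _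
          _ = ‖τ (star y1 * x1)‖ := by rw [hZw]
          _ ≤ Real.sqrt (τ (star x1 * x1)).re * Real.sqrt (τ (star y1 * y1)).re :=
              Hlp.cs hMvna hτ hx1M hy1M
          _ = Real.sqrt F * Real.sqrt F := by rw [fx, fy]
          _ = F := Real.mul_self_sqrt hF0
      linarith
    have hF1 : 1 ≤ F := by
      by_contra hcon
      push_neg at hcon
      have := key (1 - F) (by linarith)
      linarith
    have hpyth := Hlp.condexp_pythagoras hMvna hτ hN hNM hEN huM
    have huu1 : τ (star u * u) = 1 := by rw [huu.1, hτ.map_one]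
    rw [huu1] at hpyth
    have hre : (1:ℝ) = (τ (star (u - EN u) * (u - EN u))).re + F := by
      have := congrArg Complex.re hpyth
      simpa using this
    have hfa0 : 0 ≤ (τ (star (u - EN u) * (u - EN u))).re := Hlp.re_nonneg hτ haM
    have hfa : (τ (star (u - EN u) * (u - EN u))).re = 0 := by linarith
    have hz : τ (star (u - EN u) * (u - EN u)) = 0 := by
      apply Complex.ext
      · simpa using hfa
      · simpa using Hlp.im_zero hτ haM
    have ha0 : u - EN u = 0 := hτ.faithful _ haM hz
    have : u = EN u := sub_eq_zero.1 ha0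
    rw [this]
    exact hEu
  have hSN : normalizerSet M A ⊆ N := fun u hu => part2 u hu.1 hu.2.1 hu.2.2
  have hSN' : normalizerSet M A ∪ star '' normalizerSet M A ⊆ N := by
    rintro x (hx | ⟨y, hy, rfl⟩)
    · exact hSN hx
    · exact hN.star_mem y (hSN hy)
  refine ⟨?_, part2⟩
  intro x hx
  rw [← hN.double_commutant]
  exact Set.centralizer_subset (Set.centralizer_subset hSN') hx
end
end

section
/- Let G be a group with identity e and let F ≤ H ≤ G be subgroups with F normal in H satisfying property (P): for every finite subset S ⊆ G∖H there exists f ∈ F such that gfh ∉ F for all g, h ∈ S. Let M be a von Neumann algebra with faithful tracial state τ, and let u : G → U(M) be a group homomorphism into the unitary group of M with τ(u_g) = 0 for all g ≠ e and M = vN({u_g : g ∈ G}). Set L(F) := vN({u_f : f ∈ F}) and L(H) := vN({u_h : h ∈ H}), assume that every element of M (respectively of L(H), respectively of L(F)) can be approximated in ‖·‖₂ by finite linear combinations of {u_g : g ∈ G} (respectively {u_h : h ∈ H}, respectively {u_f : f ∈ F}), and assume the τ-preserving conditional expectations E_{L(F)} and E_{L(H)} exist. Then N_M(L(F))'' = L(H).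 -/
open scoped ComplexOrder

noncomputable section

variable {H : Type*} [NormedAddCommGroup H] [InnerProductSpace ℂ H] [CompleteSpace H]

section AuxLemmas

variable {S T : Set (H →L[ℂ] H)} {x y : H →L[ℂ] H}

lemma aux_cent_star (hS : ∀ s ∈ S, star s ∈ S) (hx : x ∈ Set.centralizer S) :
    star x ∈ Set.centralizer S := by
  intro t ht
  have h := hx (star t) (hS t ht)
  have h2 := congrArg star h
  simpa [star_mul] using h2.symm

lemma aux_union_star (S : Set (H →L[ℂ] H)) :
    ∀ s ∈ S ∪ star '' S, star s ∈ S ∪ star '' S := by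
  rintro s (hs | ⟨t, ht, rfl⟩)
  · exact Or.inr ⟨s, hs, rfl⟩
  · rw [star_star]; exact Or.inl ht

lemma aux_vNgen_star (hx : x ∈ vNgen S) : star x ∈ vNgen S :=
  aux_cent_star (fun s hs => aux_cent_star (aux_union_star S) hs) hx

lemma aux_cent_one : (1 : H →L[ℂ] H) ∈ Set.centralizer S := fun t _ => by
  rw [mul_one, one_mul]

lemma aux_cent_add (hx : x ∈ Set.centralizer S) (hy : y ∈ Set.centralizer S) :
    x + y ∈ Set.centralizer S := fun t ht => by
  rw [mul_add, add_mul, hx t ht, hy t ht]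

lemma aux_cent_mul (hx : x ∈ Set.centralizer S) (hy : y ∈ Set.centralizer S) :
    x * y ∈ Set.centralizer S := fun t ht => by
  rw [← mul_assoc, hx t ht, mul_assoc, hy t ht, ← mul_assoc]

lemma aux_cent_smul (c : ℂ) (hx : x ∈ Set.centralizer S) :
    c • x ∈ Set.centralizer S := fun t ht => by
  rw [mul_smul_comm, smul_mul_assoc, hx t ht]

lemma aux_vNgen_one : (1 : H →L[ℂ] H) ∈ vNgen S := aux_cent_one

lemma aux_vNgen_add (hx : x ∈ vNgen S) (hy : y ∈ vNgen S) : x + y ∈ vNgen S :=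
  aux_cent_add hx hy

lemma aux_vNgen_mul (hx : x ∈ vNgen S) (hy : y ∈ vNgen S) : x * y ∈ vNgen S :=
  aux_cent_mul hx hy

lemma aux_vNgen_smul (c : ℂ) (hy : y ∈ vNgen S) : c • y ∈ vNgen S :=
  aux_cent_smul c hy

lemma aux_vNgen_sub (hx : x ∈ vNgen S) (hy : y ∈ vNgen S) : x - y ∈ vNgen S := by
  have h := aux_vNgen_add hx (aux_vNgen_smul (-1 : ℂ) hy)
  rw [neg_one_smul, ← sub_eq_add_neg] at h
  exact h

lemma aux_subset_vNgen (S : Set (H →L[ℂ] H)) : S ⊆ vNgen S := fun s hs =>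
  Set.subset_centralizer_centralizer (Or.inl hs)

lemma aux_vNgen_le (h : S ⊆ vNgen T) : vNgen S ⊆ vNgen T := by
  have h2 : S ∪ star '' S ⊆ vNgen T := by
    rintro s (hs | ⟨t, ht, rfl⟩)
    · exact h hs
    · exact aux_vNgen_star (h ht)
  intro x hx
  have h4 := Set.centralizer_subset (Set.centralizer_subset h2) hx
  unfold vNgen at h4 ⊢
  rwa [Set.centralizer_centralizer_centralizer] at h4

lemma aux_vNgen_mono (h : S ⊆ T) : vNgen S ⊆ vNgen T :=
  aux_vNgen_le (fun s hs => aux_subset_vNgen T (h hs))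

end AuxLemmas


section ConjLemmas

variable {S : Set (H →L[ℂ] H)} {v : H →L[ℂ] H}

lemma aux_star_unitary (hv : IsUnitary v) : IsUnitary (star v) :=
  ⟨by rw [star_star]; exact hv.2, by rw [star_star]; exact hv.1⟩

lemma aux_conj_mul (hv : IsUnitary v) (a b : H →L[ℂ] H) :
    (v * a * star v) * (v * b * star v) = v * (a * b) * star v := by
  have h1 := hv.1
  calc (v * a * star v) * (v * b * star v)
      = v * (a * ((star v * v) * (b * star v))) := by simp only [mul_assoc]
    _ = v * (a * b) * star v := by rw [h1, one_mul]; simp only [mul_assoc]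

lemma aux_conj_star (v a : H →L[ℂ] H) :
    star (v * a * star v) = v * star a * star v := by
  simp [star_mul, mul_assoc]

lemma aux_conj_cancel (hv : IsUnitary v) (a : H →L[ℂ] H) :
    star v * (v * a * star v) * v = a := by
  have h1 := hv.1
  calc star v * (v * a * star v) * v
      = (star v * v) * (a * (star v * v)) := by simp only [mul_assoc]
    _ = a := by rw [h1, one_mul, mul_one]

lemma aux_conj_image_cancel (hv : IsUnitary v) (S : Set (H →L[ℂ] H)) :
    (fun a => star v * a * v) '' ((fun a => v * a * star v) '' S) = S := by
  rw [Set.image_image]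
  have h : ∀ a : H →L[ℂ] H, star v * (v * a * star v) * v = a := aux_conj_cancel hv
  simp [h]

lemma aux_conj_centralizer_subset (hv : IsUnitary v) (S : Set (H →L[ℂ] H)) :
    (fun a => v * a * star v) '' Set.centralizer S
      ⊆ Set.centralizer ((fun a => v * a * star v) '' S) := by
  rintro _ ⟨x, hx, rfl⟩ _ ⟨s, hs, rfl⟩
  dsimp only
  rw [aux_conj_mul hv, aux_conj_mul hv, hx s hs]

lemma aux_conj_centralizer (hv : IsUnitary v) (S : Set (H →L[ℂ] H)) :
    (fun a => v * a * star v) '' Set.centralizer S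
      = Set.centralizer ((fun a => v * a * star v) '' S) := by
  refine subset_antisymm (aux_conj_centralizer_subset hv S) ?_
  intro x hx
  refine ⟨star v * x * v, ?_, ?_⟩
  · have h2 := aux_conj_centralizer_subset (aux_star_unitary hv)
      ((fun a => v * a * star v) '' S)
    have h3 : (fun a => star v * a * star (star v)) ''
        ((fun a => v * a * star v) '' S) = S := by
      rw [star_star]; exact aux_conj_image_cancel hv S
    have h4 := h2 ⟨x, hx, rfl⟩
    rw [h3] at h4
    simpa [star_star] using h4
  · dsimp only
    have h5 := aux_conj_cancel (aux_star_unitary hv) x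
    rw [star_star] at h5
    exact h5

lemma aux_conj_star_image (v : H →L[ℂ] H) (S : Set (H →L[ℂ] H)) :
    (fun a => v * a * star v) '' (star '' S) = star '' ((fun a => v * a * star v) '' S) := by
  rw [Set.image_image, Set.image_image]
  apply Set.image_congr'
  intro a
  exact (aux_conj_star v a).symm

lemma aux_conj_vNgen (hv : IsUnitary v) (S : Set (H →L[ℂ] H)) :
    (fun a => v * a * star v) '' vNgen S = vNgen ((fun a => v * a * star v) '' S) := by
  unfold vNgen
  rw [aux_conj_centralizer hv, aux_conj_centralizer hv, Set.image_union, aux_conj_star_image]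

end ConjLemmas


section TraceLemmas

open Complex

variable {M : Set (H →L[ℂ] H)} {τ : (H →L[ℂ] H) → ℂ} {a b x y : H →L[ℂ] H}

lemma auxM_zero (hM : IsVonNeumannAlgebra M) : (0 : H →L[ℂ] H) ∈ M := by
  have h := hM.smul_mem 0 1 hM.one_mem
  simpa using h

lemma auxM_neg (hM : IsVonNeumannAlgebra M) (hx : x ∈ M) : -x ∈ M := by
  have h := hM.smul_mem (-1) x hx
  simpa using h

lemma auxM_sub (hM : IsVonNeumannAlgebra M) (hx : x ∈ M) (hy : y ∈ M) : x - y ∈ M := by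
  have h := hM.add_mem x hx (-y) (auxM_neg hM hy)
  simpa [sub_eq_add_neg] using h

lemma auxM_sum (hM : IsVonNeumannAlgebra M) {ι : Type*} (s : Finset ι)
    (f : ι → (H →L[ℂ] H)) (hf : ∀ i ∈ s, f i ∈ M) : (∑ i ∈ s, f i) ∈ M := by
  classical
  induction s using Finset.cons_induction with
  | empty => simpa using auxM_zero hM
  | cons a s ha ih =>
      rw [Finset.sum_cons]
      exact hM.add_mem _ (hf a (Finset.mem_cons_self a s)) _
        (ih fun i hi => hf i (Finset.mem_cons_of_mem hi))

lemma auxT_zero (hM : IsVonNeumannAlgebra M) (hτ : IsFaithfulTracialState M τ) :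
    τ 0 = 0 := by
  have h := hτ.map_smul 0 0 (auxM_zero hM)
  simpa using h

lemma auxT_sub (hM : IsVonNeumannAlgebra M) (hτ : IsFaithfulTracialState M τ)
    (hx : x ∈ M) (hy : y ∈ M) : τ (x - y) = τ x - τ y := by
  have h1 : τ (x + (-1 : ℂ) • y) = τ x + τ ((-1 : ℂ) • y) :=
    hτ.map_add _ hx _ (hM.smul_mem _ _ hy)
  rw [hτ.map_smul _ _ hy, neg_one_smul, ← sub_eq_add_neg] at h1
  rw [h1]; ring

lemma auxT_sum (hM : IsVonNeumannAlgebra M) (hτ : IsFaithfulTracialState M τ)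
    {ι : Type*} (s : Finset ι) (f : ι → (H →L[ℂ] H)) (hf : ∀ i ∈ s, f i ∈ M) :
    τ (∑ i ∈ s, f i) = ∑ i ∈ s, τ (f i) := by
  classical
  induction s using Finset.cons_induction with
  | empty => simpa using auxT_zero hM hτ
  | cons a s ha ih =>
      rw [Finset.sum_cons, Finset.sum_cons,
        hτ.map_add _ (hf a (Finset.mem_cons_self a s)) _
          (auxM_sum hM s f fun i hi => hf i (Finset.mem_cons_of_mem hi)),
        ih fun i hi => hf i (Finset.mem_cons_of_mem hi)]

lemma aux_re_nonneg (hτ : IsFaithfulTracialState M τ) (hx : x ∈ M) :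
    0 ≤ (τ (star x * x)).re := by
  have h := (Complex.le_def.mp (hτ.nonneg x hx)).1
  simpa using h

lemma aux_im_zero (hτ : IsFaithfulTracialState M τ) (hx : x ∈ M) :
    (τ (star x * x)).im = 0 := by
  have h := (Complex.le_def.mp (hτ.nonneg x hx)).2
  simpa using h.symm

lemma auxT_star (hM : IsVonNeumannAlgebra M) (hτ : IsFaithfulTracialState M τ)
    (hx : x ∈ M) : τ (star x) = (starRingEnd ℂ) (τ x) := by
  have hsx : star x ∈ M := hM.star_mem x hx
  have hxx : star x * x ∈ M := hM.mul_mem _ hsx _ hx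
  have him0 : (τ (star x * x)).im = 0 := aux_im_zero hτ hx
  -- first expansion : (x+1)
  have h1mem : x + 1 ∈ M := hM.add_mem _ hx _ hM.one_mem
  have h1 : star (x + 1) * (x + 1) = star x * x + (star x + (x + 1)) := by
    simp only [star_add, star_one]
    noncomm_ring
  have e1 : τ (star (x + 1) * (x + 1)) = τ (star x * x) + (τ (star x) + (τ x + 1)) := by
    rw [h1, hτ.map_add _ hxx _ (hM.add_mem _ hsx _ h1mem),
      hτ.map_add _ hsx _ h1mem, hτ.map_add _ hx _ hM.one_mem, hτ.map_one]
  have i1 : (τ (star x)).im + (τ x).im = 0 := by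
    have h := (Complex.le_def.mp (hτ.nonneg _ h1mem)).2
    rw [e1] at h
    simp only [Complex.zero_im, Complex.add_im, Complex.one_im, him0] at h
    linarith
  -- second expansion : (x + I•1)
  have hJmem : x + Complex.I • (1 : H →L[ℂ] H) ∈ M :=
    hM.add_mem _ hx _ (hM.smul_mem _ _ hM.one_mem)
  have h2 : star (x + Complex.I • (1 : H →L[ℂ] H)) * (x + Complex.I • (1 : H →L[ℂ] H))
      = star x * x + (Complex.I • star x + ((-Complex.I) • x + 1)) := by
    simp only [star_add, star_smul, star_one, Complex.star_def, Complex.conj_I, add_mul,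
      mul_add, smul_mul_assoc, mul_smul_comm, smul_smul, mul_one, one_mul, neg_mul,
      Complex.I_mul_I, neg_neg, one_smul, neg_smul, smul_neg]
    match_scalars <;> simp [Complex.I_sq] <;> ring
  have e2 : τ (star (x + Complex.I • (1 : H →L[ℂ] H)) * (x + Complex.I • (1 : H →L[ℂ] H)))
      = τ (star x * x) + (Complex.I * τ (star x) + (-Complex.I * τ x + 1)) := by
    rw [h2, hτ.map_add _ hxx _ (hM.add_mem _ (hM.smul_mem _ _ hsx) _
        (hM.add_mem _ (hM.smul_mem _ _ hx) _ hM.one_mem)),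
      hτ.map_add _ (hM.smul_mem _ _ hsx) _ (hM.add_mem _ (hM.smul_mem _ _ hx) _ hM.one_mem),
      hτ.map_add _ (hM.smul_mem _ _ hx) _ hM.one_mem,
      hτ.map_smul _ _ hsx, hτ.map_smul _ _ hx, hτ.map_one]
  have i2 : (τ (star x)).re = (τ x).re := by
    have h := (Complex.le_def.mp (hτ.nonneg _ hJmem)).2
    rw [e2] at h
    simp only [Complex.zero_im, Complex.add_im, Complex.one_im, Complex.mul_im,
      Complex.I_re, Complex.I_im, Complex.neg_re, Complex.neg_im, him0] at h
    linarith
  refine Complex.ext ?_ ?_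
  · simpa using i2
  · simp only [Complex.conj_im]
    linarith

lemma auxT_conj_sym (hM : IsVonNeumannAlgebra M) (hτ : IsFaithfulTracialState M τ)
    (ha : a ∈ M) (hb : b ∈ M) :
    τ (star b * a) = (starRingEnd ℂ) (τ (star a * b)) := by
  have h := auxT_star hM hτ (hM.mul_mem _ (hM.star_mem a ha) _ hb)
  rw [star_mul, star_star] at h
  exact h

lemma aux_norm2_nonneg : 0 ≤ norm2 τ x := Real.sqrt_nonneg _

lemma aux_norm2_sq (hτ : IsFaithfulTracialState M τ) (hx : x ∈ M) :
    norm2 τ x ^ 2 = (τ (star x * x)).re :=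
  Real.sq_sqrt (aux_re_nonneg hτ hx)

lemma aux_norm2_eq_zero (hM : IsVonNeumannAlgebra M) (hτ : IsFaithfulTracialState M τ)
    (hx : x ∈ M) (h : norm2 τ x = 0) : x = 0 := by
  have h2 : (τ (star x * x)).re ≤ 0 := Real.sqrt_eq_zero'.mp h
  have h3 : (τ (star x * x)).re = 0 := le_antisymm h2 (aux_re_nonneg hτ hx)
  exact hτ.faithful x hx (Complex.ext (by simpa using h3) (by simpa using aux_im_zero hτ hx))

lemma aux_norm2_zero (hM : IsVonNeumannAlgebra M) (hτ : IsFaithfulTracialState M τ) :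
    norm2 τ (0 : H →L[ℂ] H) = 0 := by
  unfold norm2
  rw [mul_zero, auxT_zero hM hτ]
  simp

lemma aux_norm2_smul (hM : IsVonNeumannAlgebra M) (hτ : IsFaithfulTracialState M τ)
    (c : ℂ) (hx : x ∈ M) : norm2 τ (c • x) = ‖c‖ * norm2 τ x := by
  unfold norm2
  have h1 : star (c • x) * (c • x) = ((starRingEnd ℂ c) * c) • (star x * x) := by
    rw [star_smul, smul_mul_assoc, mul_smul_comm, smul_smul]
    rfl
  have h2 : (starRingEnd ℂ c) * c = ((‖c‖ ^ 2 : ℝ) : ℂ) := by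
    rw [mul_comm, Complex.mul_conj, Complex.normSq_eq_norm_sq]
  rw [h1, hτ.map_smul _ _ (hM.mul_mem _ (hM.star_mem x hx) _ hx), h2]
  have h3 : (((‖c‖ ^ 2 : ℝ) : ℂ) * τ (star x * x)).re
      = ‖c‖ ^ 2 * (τ (star x * x)).re := by
    simp [← Complex.ofReal_pow, Complex.ofReal_re, Complex.ofReal_im]
  rw [h3, Real.sqrt_mul (by positivity), Real.sqrt_sq (norm_nonneg c)]

lemma auxT_cs (hM : IsVonNeumannAlgebra M) (hτ : IsFaithfulTracialState M τ)
    (ha : a ∈ M) (hb : b ∈ M) :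
    ‖τ (star a * b)‖ ≤ norm2 τ a * norm2 τ b := by
  by_cases hz : τ (star a * a) = 0
  · have ha0 : a = 0 := hτ.faithful a ha hz
    subst ha0
    rw [star_zero, zero_mul, auxT_zero hM hτ]
    simpa using mul_nonneg (aux_norm2_nonneg (τ := τ) (x := 0)) (aux_norm2_nonneg (τ := τ) (x := b))
  · set r : ℝ := (τ (star a * a)).re with hrdef
    have hrpos : 0 < r := by
      rcases lt_or_eq_of_le (aux_re_nonneg hτ ha) with h | h
      · exact h
      · exact absurd (Complex.ext h.symm (aux_im_zero hτ ha)) hz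
    set t : ℂ := τ (star a * b) with htdef
    set m : H →L[ℂ] H := (r : ℂ) • b - t • a with hmdef
    have hmM : m ∈ M := auxM_sub hM (hM.smul_mem _ _ hb) (hM.smul_mem _ _ ha)
    have haa : τ (star a * a) = ((r : ℂ)) := Complex.ext rfl (aux_im_zero hτ ha)
    have hba : τ (star b * a) = (starRingEnd ℂ) t := auxT_conj_sym hM hτ ha hb
    have hexp : star m * m
        = ((r : ℂ) * (r : ℂ)) • (star b * b) - ((r : ℂ) * t) • (star b * a)
          - ((starRingEnd ℂ t) * (r : ℂ)) • (star a * b)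
          + ((starRingEnd ℂ t) * t) • (star a * a) := by
      rw [hmdef]
      simp only [star_sub, star_smul, Complex.star_def, Complex.conj_ofReal, sub_mul,
        mul_sub, smul_mul_assoc, mul_smul_comm, smul_smul]
      module
    have hmem1 : star b * b ∈ M := hM.mul_mem _ (hM.star_mem b hb) _ hb
    have hmem2 : star b * a ∈ M := hM.mul_mem _ (hM.star_mem b hb) _ ha
    have hmem3 : star a * b ∈ M := hM.mul_mem _ (hM.star_mem a ha) _ hb
    have hmem4 : star a * a ∈ M := hM.mul_mem _ (hM.star_mem a ha) _ ha
    have etau : τ (star m * m)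
        = ((r : ℂ) * (r : ℂ)) * τ (star b * b) - ((r : ℂ) * t) * ((starRingEnd ℂ) t)
          - ((starRingEnd ℂ t) * (r : ℂ)) * t + ((starRingEnd ℂ t) * t) * ((r : ℂ)) := by
      rw [hexp]
      rw [hτ.map_add _ (auxM_sub hM (auxM_sub hM (hM.smul_mem _ _ hmem1)
            (hM.smul_mem _ _ hmem2)) (hM.smul_mem _ _ hmem3)) _ (hM.smul_mem _ _ hmem4),
        auxT_sub hM hτ (auxM_sub hM (hM.smul_mem _ _ hmem1) (hM.smul_mem _ _ hmem2))
          (hM.smul_mem _ _ hmem3),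
        auxT_sub hM hτ (hM.smul_mem _ _ hmem1) (hM.smul_mem _ _ hmem2)]
      rw [hτ.map_smul _ _ hmem1, hτ.map_smul _ _ hmem2, hτ.map_smul _ _ hmem3,
        hτ.map_smul _ _ hmem4, hba, haa, ← htdef]
    have etau2 : τ (star m * m)
        = ((r : ℂ) * (r : ℂ)) * τ (star b * b) - (r : ℂ) * ((Complex.normSq t : ℝ) : ℂ) := by
      rw [etau]
      have : t * (starRingEnd ℂ) t = ((Complex.normSq t : ℝ) : ℂ) := Complex.mul_conj t
      ring_nf
      rw [mul_assoc, this]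
    have hre := aux_re_nonneg hτ hmM
    rw [etau2] at hre
    have hre2 : 0 ≤ r * r * (τ (star b * b)).re - r * Complex.normSq t := by
      have h := hre
      simp only [Complex.sub_re, Complex.mul_re, Complex.ofReal_re, Complex.ofReal_im,
        Complex.mul_im, zero_mul, mul_zero, sub_zero, zero_add, add_zero] at h
      nlinarith [h]
    have h6 : Complex.normSq t ≤ r * (τ (star b * b)).re := by
      nlinarith [hrpos]
    have h7 : ‖t‖ ^ 2 ≤ r * (τ (star b * b)).re := by
      rwa [Complex.sq_norm]
    calc ‖t‖ = Real.sqrt (‖t‖ ^ 2) :=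
          (Real.sqrt_sq (norm_nonneg t)).symm
      _ ≤ Real.sqrt (r * (τ (star b * b)).re) := Real.sqrt_le_sqrt h7
      _ = Real.sqrt r * Real.sqrt ((τ (star b * b)).re) := Real.sqrt_mul hrpos.le _
      _ = norm2 τ a * norm2 τ b := rfl

lemma aux_norm2_triangle (hM : IsVonNeumannAlgebra M) (hτ : IsFaithfulTracialState M τ)
    (hx : x ∈ M) (hy : y ∈ M) : norm2 τ (x + y) ≤ norm2 τ x + norm2 τ y := by
  have hxyM : x + y ∈ M := hM.add_mem x hx y hy
  have hmem1 : star x * x ∈ M := hM.mul_mem _ (hM.star_mem x hx) _ hx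
  have hmem2 : star x * y ∈ M := hM.mul_mem _ (hM.star_mem x hx) _ hy
  have hmem3 : star y * x ∈ M := hM.mul_mem _ (hM.star_mem y hy) _ hx
  have hmem4 : star y * y ∈ M := hM.mul_mem _ (hM.star_mem y hy) _ hy
  have hexp : star (x + y) * (x + y)
      = star x * x + (star x * y + (star y * x + star y * y)) := by
    simp only [star_add, add_mul, mul_add]
    abel
  have e : τ (star (x + y) * (x + y))
      = τ (star x * x) + (τ (star x * y) + (τ (star y * x) + τ (star y * y))) := by
    rw [hexp, hτ.map_add _ hmem1 _ (hM.add_mem _ hmem2 _ (hM.add_mem _ hmem3 _ hmem4)),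
      hτ.map_add _ hmem2 _ (hM.add_mem _ hmem3 _ hmem4), hτ.map_add _ hmem3 _ hmem4]
  have hconj : τ (star y * x) = (starRingEnd ℂ) (τ (star x * y)) := auxT_conj_sym hM hτ hx hy
  have hre : (τ (star (x + y) * (x + y))).re
      = (τ (star x * x)).re + 2 * (τ (star x * y)).re + (τ (star y * y)).re := by
    rw [e, hconj]
    simp only [Complex.add_re, Complex.conj_re]
    ring
  have hcs := auxT_cs hM hτ hx hy
  have hre_le : (τ (star (x + y) * (x + y))).re ≤ (norm2 τ x + norm2 τ y) ^ 2 := by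
    rw [hre]
    have h1 : (τ (star x * y)).re ≤ ‖τ (star x * y)‖ := Complex.re_le_norm _
    have h2 : (τ (star x * x)).re = norm2 τ x ^ 2 := (aux_norm2_sq hτ hx).symm
    have h3 : (τ (star y * y)).re = norm2 τ y ^ 2 := (aux_norm2_sq hτ hy).symm
    nlinarith [h1, hcs]
  calc norm2 τ (x + y) = Real.sqrt ((τ (star (x + y) * (x + y))).re) := rfl
    _ ≤ Real.sqrt ((norm2 τ x + norm2 τ y) ^ 2) := Real.sqrt_le_sqrt hre_le
    _ = norm2 τ x + norm2 τ y :=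
        Real.sqrt_sq (add_nonneg aux_norm2_nonneg aux_norm2_nonneg)

lemma aux_norm2_neg (hM : IsVonNeumannAlgebra M) (hτ : IsFaithfulTracialState M τ)
    (hx : x ∈ M) : norm2 τ (-x) = norm2 τ x := by
  have h := aux_norm2_smul hM hτ (-1) hx
  simpa using h

lemma aux_norm2_sum_le (hM : IsVonNeumannAlgebra M) (hτ : IsFaithfulTracialState M τ)
    {ι : Type*} (s : Finset ι) (f : ι → (H →L[ℂ] H)) (hf : ∀ i ∈ s, f i ∈ M) :
    norm2 τ (∑ i ∈ s, f i) ≤ ∑ i ∈ s, norm2 τ (f i) := by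
  classical
  induction s using Finset.cons_induction with
  | empty => simp [aux_norm2_zero hM hτ]
  | cons a s ha ih =>
      rw [Finset.sum_cons, Finset.sum_cons]
      calc norm2 τ (f a + ∑ i ∈ s, f i)
          ≤ norm2 τ (f a) + norm2 τ (∑ i ∈ s, f i) :=
            aux_norm2_triangle hM hτ (hf a (Finset.mem_cons_self a s))
              (auxM_sum hM s f fun i hi => hf i (Finset.mem_cons_of_mem hi))
        _ ≤ norm2 τ (f a) + ∑ i ∈ s, norm2 τ (f i) := by
            have := ih fun i hi => hf i (Finset.mem_cons_of_mem hi)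
            linarith

lemma aux_norm2_unitary_mul (hsw : star y * y = 1) :
    norm2 τ (y * x) = norm2 τ x := by
  unfold norm2
  have h : star (y * x) * (y * x) = star x * x := by
    rw [star_mul]
    simp only [mul_assoc]
    rw [← mul_assoc (star y) y x, hsw, one_mul]
  rw [h]

lemma aux_norm2_mul_unitary (hM : IsVonNeumannAlgebra M) (hτ : IsFaithfulTracialState M τ)
    (hx : x ∈ M) (hw : y ∈ M) (hww : y * star y = 1) :
    norm2 τ (x * y) = norm2 τ x := by
  unfold norm2
  have h1 : star (x * y) * (x * y) = star y * (star x * x * y) := by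
    rw [star_mul]; simp only [mul_assoc]
  have h2 : τ (star y * (star x * x * y)) = τ ((star x * x * y) * star y) :=
    hτ.tracial _ (hM.star_mem y hw) _
      (hM.mul_mem _ (hM.mul_mem _ (hM.star_mem x hx) _ hx) _ hw)
  have h3 : (star x * x * y) * star y = star x * x := by
    rw [mul_assoc, hww, mul_one]
  rw [h1, h2, h3]

end TraceLemmas


section GroupCombLemmas

open scoped Classical

variable {M : Set (H →L[ℂ] H)} {τ : (H →L[ℂ] H) → ℂ} {x y : H →L[ℂ] H}

lemma aux_smul_mul_smul (c d : ℂ) (x y : H →L[ℂ] H) :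
    (c • x) * (d • y) = (c * d) • (x * y) := by
  rw [smul_mul_assoc, mul_smul_comm, smul_smul]

lemma aux_star_mul_self (hsw : star y * y = 1) (x : H →L[ℂ] H) :
    star (y * x) * (y * x) = star x * x := by
  rw [star_mul]
  simp only [mul_assoc]
  rw [← mul_assoc (star y) y x, hsw, one_mul]

lemma auxT_mul_unitary_self (hM : IsVonNeumannAlgebra M) (hτ : IsFaithfulTracialState M τ)
    (hx : x ∈ M) (hy : y ∈ M) (h2 : y * star y = 1) :
    τ (star (x * y) * (x * y)) = τ (star x * x) := by
  have h1 : star (x * y) * (x * y) = star y * (star x * x * y) := by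
    rw [star_mul]; simp only [mul_assoc]
  have h3 : τ (star y * (star x * x * y)) = τ ((star x * x * y) * star y) :=
    hτ.tracial _ (hM.star_mem y hy) _
      (hM.mul_mem _ (hM.mul_mem _ (hM.star_mem x hx) _ hx) _ hy)
  have h4 : (star x * x * y) * star y = star x * x := by
    rw [mul_assoc, h2, mul_one]
  rw [h1, h3, h4]

lemma aux_tau_mul_sum (hM : IsVonNeumannAlgebra M) (hτ : IsFaithfulTracialState M τ)
    {ι : Type*} (s : Finset ι) {a : H →L[ℂ] H} (haM : a ∈ M) (c : ι → ℂ)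
    (m : ι → (H →L[ℂ] H)) (hm : ∀ i ∈ s, m i ∈ M) :
    τ (a * ∑ i ∈ s, c i • m i) = ∑ i ∈ s, c i * τ (a * m i) := by
  rw [Finset.mul_sum]
  rw [auxT_sum hM hτ s _ (fun i hi => hM.mul_mem _ haM _ (hM.smul_mem _ _ (hm i hi)))]
  apply Finset.sum_congr rfl
  intro i hi
  rw [mul_smul_comm, hτ.map_smul _ _ (hM.mul_mem _ haM _ (hm i hi))]

variable {G : Type*} [Group G] {u : G → (H →L[ℂ] H)}

lemma aux_tau_pair (hτ : IsFaithfulTracialState M τ)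
    (hu1 : u 1 = 1) (humul : ∀ g h : G, u (g * h) = u g * u h)
    (hustar : ∀ g : G, star (u g) = u g⁻¹)
    (htau0 : ∀ g : G, g ≠ 1 → τ (u g) = 0) (g h : G) :
    τ (star (u g) * u h) = if g = h then 1 else 0 := by
  classical
  rw [hustar, ← humul]
  by_cases hgh : g = h
  · rw [if_pos hgh, hgh, inv_mul_cancel, hu1, hτ.map_one]
  · rw [if_neg hgh]
    exact htau0 _ (fun hc => hgh (inv_mul_eq_one.mp hc))

lemma aux_tau_inner (hM : IsVonNeumannAlgebra M) (hτ : IsFaithfulTracialState M τ)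
    (hu1 : u 1 = 1) (humul : ∀ g h : G, u (g * h) = u g * u h)
    (hustar : ∀ g : G, star (u g) = u g⁻¹)
    (huM : ∀ g : G, u g ∈ M)
    (htau0 : ∀ g : G, g ≠ 1 → τ (u g) = 0)
    {ι κ : Type*} (s : Finset ι) (t : Finset κ) (c : ι → ℂ) (d : κ → ℂ)
    (a : ι → G) (b : κ → G) :
    τ (star (∑ i ∈ s, c i • u (a i)) * ∑ j ∈ t, d j • u (b j))
      = ∑ i ∈ s, ∑ j ∈ t,
          (starRingEnd ℂ) (c i) * d j * (if a i = b j then 1 else 0) := by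
  classical
  have htM : (∑ j ∈ t, d j • u (b j)) ∈ M :=
    auxM_sum hM _ _ (fun j _ => hM.smul_mem _ _ (huM _))
  rw [star_sum, Finset.sum_mul,
    auxT_sum hM hτ s _ (fun i _ => hM.mul_mem _ (hM.star_mem _
      (hM.smul_mem _ _ (huM _))) _ htM)]
  apply Finset.sum_congr rfl
  intro i _
  rw [star_smul, smul_mul_assoc,
    hτ.map_smul _ _ (hM.mul_mem _ (hM.star_mem _ (huM _)) _ htM),
    aux_tau_mul_sum hM hτ t (hM.star_mem _ (huM _)) d _ (fun j _ => huM _),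
    Finset.mul_sum]
  apply Finset.sum_congr rfl
  intro j _
  rw [aux_tau_pair hτ hu1 humul hustar htau0]
  push_cast [Complex.star_def]
  ring

end GroupCombLemmas


section MainLemma

open scoped Classical

variable {G : Type*} [Group G]

set_option maxHeartbeats 2000000 in
lemma aux_normalizer_mem
    (F Hgp : Subgroup G) (hFH : F ≤ Hgp)
    (hP : ∀ S : Finset G, (∀ g ∈ S, g ∉ Hgp) →
      ∃ f ∈ F, ∀ g ∈ S, ∀ h ∈ S, g * f * h ∉ F)
    (M : Set (H →L[ℂ] H)) (τ : (H →L[ℂ] H) → ℂ) (u : G → (H →L[ℂ] H))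
    (hMvn : IsVonNeumannAlgebra M) (hτ : IsFaithfulTracialState M τ)
    (hu1 : u 1 = 1) (humul : ∀ g h : G, u (g * h) = u g * u h)
    (hustar : ∀ g : G, star (u g) = u g⁻¹)
    (huM : ∀ g : G, u g ∈ M) (huU : ∀ g : G, IsUnitary (u g))
    (htau0 : ∀ g : G, g ≠ 1 → τ (u g) = 0)
    (hgen : M = vNgen (Set.range u))
    (hdenseM : ∀ x ∈ M, ∀ ε : ℝ, 0 < ε → ∃ (n : ℕ) (c : Fin n → ℂ) (g : Fin n → G),
      norm2 τ (x - ∑ i, c i • u (g i)) < ε)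
    (hdenseF : ∀ x ∈ vNgen (u '' (F : Set G)), ∀ ε : ℝ, 0 < ε →
      ∃ (n : ℕ) (c : Fin n → ℂ) (g : Fin n → G), (∀ i, g i ∈ F) ∧
        norm2 τ (x - ∑ i, c i • u (g i)) < ε)
    (EH : (H →L[ℂ] H) → (H →L[ℂ] H))
    (hEH : IsCondExp M (vNgen (u '' (Hgp : Set G))) τ EH)
    {v : H →L[ℂ] H} (hv : v ∈ normalizerSet M (vNgen (u '' (F : Set G)))) :
    v ∈ vNgen (u '' (Hgp : Set G)) := by
  obtain ⟨hvM, hvU, hvN⟩ := hv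
  have hLH_M : vNgen (u '' (Hgp : Set G)) ⊆ M := by
    rw [hgen]; exact aux_vNgen_mono (Set.image_subset_range u _)
  have hLF_LH : vNgen (u '' (F : Set G)) ⊆ vNgen (u '' (Hgp : Set G)) :=
    aux_vNgen_mono (Set.image_mono (fun g hg => hFH hg))
  have hEvLH : EH v ∈ vNgen (u '' (Hgp : Set G)) := hEH.1 v hvM
  have hEvM : EH v ∈ M := hLH_M hEvLH
  set x : H →L[ℂ] H := v - EH v with hxdef
  have hxM : x ∈ M := auxM_sub hMvn hvM hEvM
  have hxb : ∀ b ∈ vNgen (u '' (Hgp : Set G)), τ (x * b) = 0 :=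
    fun b hb => hEH.2 v hvM b hb
  have hsxb : ∀ b ∈ vNgen (u '' (Hgp : Set G)), τ (star x * b) = 0 := by
    intro b hb
    have h1 : τ (x * star b) = 0 := hxb (star b) (aux_vNgen_star hb)
    have h2 : τ (star b * x) = 0 := by
      rw [hτ.tracial _ (hMvn.star_mem _ (hLH_M hb)) _ hxM]; exact h1
    have h3 := auxT_conj_sym hMvn hτ (hLH_M hb) hxM
    rw [h2, map_zero] at h3
    exact h3
  -- the normalizer moves group unitaries of F to L(F)
  have hwLF : ∀ f : G, f ∈ F → v * u f * star v ∈ vNgen (u '' (F : Set G)) := by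
    intro f hf
    have hf2 : u f ∈ vNgen (u '' (F : Set G)) := aux_subset_vNgen _ ⟨f, hf, rfl⟩
    rw [← hvN]
    exact ⟨u f, hf2, rfl⟩
  have hsww : ∀ f : G, star (v * u f * star v) * (v * u f * star v) = 1 := by
    intro f
    rw [aux_conj_star, aux_conj_mul hvU, (huU f).1, mul_one, hvU.2]
  -- Step A : x * u f = (v u_f v*) x for f ∈ F
  have stepA : ∀ f : G, f ∈ F → x * u f = (v * u f * star v) * x := by
    intro f hf
    have hwLF' := hwLF f hf
    have hwLH := hLF_LH hwLF'
    set w : H →L[ℂ] H := v * u f * star v with hwdef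
    have hwM : w ∈ M := hLH_M hwLH
    have hufLH : u f ∈ vNgen (u '' (Hgp : Set G)) := aux_subset_vNgen _ ⟨f, hFH hf, rfl⟩
    have hwv : w * v = v * u f := by
      rw [hwdef, mul_assoc (v * u f) (star v) v, hvU.1, mul_one]
    set bb : H →L[ℂ] H := w * EH v - EH v * u f with hbbdef
    have hbbLH : bb ∈ vNgen (u '' (Hgp : Set G)) :=
      aux_vNgen_sub (aux_vNgen_mul hwLH hEvLH) (aux_vNgen_mul hEvLH hufLH)
    have hbbM : bb ∈ M := hLH_M hbbLH
    have hident : x * u f = w * x + bb := by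
      rw [hbbdef, hxdef, sub_mul, mul_sub, hwv]; abel
    have hwxM : w * x ∈ M := hMvn.mul_mem _ hwM _ hxM
    have e1 : τ (star (x * u f) * (x * u f)) = τ (star x * x) :=
      auxT_mul_unitary_self hMvn hτ hxM (huM f) (huU f).2
    have hq : star (w * x) * (w * x) = star x * x := aux_star_mul_self (hsww f) _
    have hcross1 : τ (star (w * x) * bb) = 0 := by
      rw [star_mul, mul_assoc]
      exact hsxb _ (aux_vNgen_mul (aux_vNgen_star hwLH) hbbLH)
    have hcross2 : τ (star bb * (w * x)) = 0 := by
      have h := auxT_conj_sym hMvn hτ hwxM hbbM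
      rw [hcross1, map_zero] at h
      exact h
    have hexp : star (w * x + bb) * (w * x + bb)
        = (star (w * x) * (w * x) + star (w * x) * bb)
          + (star bb * (w * x) + star bb * bb) := by
      rw [star_add, add_mul, mul_add, mul_add]
    have e2 : τ (star (x * u f) * (x * u f))
        = (τ (star (w * x) * (w * x)) + τ (star (w * x) * bb))
          + (τ (star bb * (w * x)) + τ (star bb * bb)) := by
      rw [hident, hexp,
        hτ.map_add _ (hMvn.add_mem _ (hMvn.mul_mem _ (hMvn.star_mem _ hwxM) _ hwxM) _
            (hMvn.mul_mem _ (hMvn.star_mem _ hwxM) _ hbbM)) _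
          (hMvn.add_mem _ (hMvn.mul_mem _ (hMvn.star_mem _ hbbM) _ hwxM) _
            (hMvn.mul_mem _ (hMvn.star_mem _ hbbM) _ hbbM)),
        hτ.map_add _ (hMvn.mul_mem _ (hMvn.star_mem _ hwxM) _ hwxM) _
          (hMvn.mul_mem _ (hMvn.star_mem _ hwxM) _ hbbM),
        hτ.map_add _ (hMvn.mul_mem _ (hMvn.star_mem _ hbbM) _ hwxM) _
          (hMvn.mul_mem _ (hMvn.star_mem _ hbbM) _ hbbM)]
    rw [e1, hq, hcross1, hcross2] at e2
    have hbb0 : τ (star bb * bb) = 0 := by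
      have := e2
      rw [add_zero, zero_add] at this
      exact (left_eq_add.mp this)
    have hbbz : bb = 0 := hτ.faithful bb hbbM hbb0
    rw [hident, hbbz, add_zero]
  -- the key estimate
  have hδ0 : 0 ≤ norm2 τ x := aux_norm2_nonneg
  have key : ∀ ε : ℝ, 0 < ε → ε ≤ 1 →
      (τ (star x * x)).re ≤ ε * (3 * norm2 τ x + 2) := by
    intro ε hε hε1
    obtain ⟨n, c0, g, hy0⟩ := hdenseM x hxM ε hε
    set c : Fin n → ℂ := fun i => if g i ∈ Hgp then 0 else c0 i with hcdef
    set y0 : H →L[ℂ] H := ∑ i, c0 i • u (g i) with hy0def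
    set y : H →L[ℂ] H := ∑ i, c i • u (g i) with hydef
    have hyM : y ∈ M := auxM_sum hMvn _ _ (fun i _ => hMvn.smul_mem _ _ (huM _))
    have hy0M : y0 ∈ M := auxM_sum hMvn _ _ (fun i _ => hMvn.smul_mem _ _ (huM _))
    have hdM : y0 - y ∈ M := auxM_sub hMvn hy0M hyM
    have haM : x - y0 ∈ M := auxM_sub hMvn hxM hy0M
    have hxyM : x - y ∈ M := auxM_sub hMvn hxM hyM
    have hdsum : y0 - y = ∑ i, (c0 i - c i) • u (g i) := by
      rw [hy0def, hydef, ← Finset.sum_sub_distrib]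
      exact Finset.sum_congr rfl (fun i _ => (sub_smul _ _ _).symm)
    have hxd : τ (star x * (y0 - y)) = 0 := by
      rw [hdsum, aux_tau_mul_sum hMvn hτ _ (hMvn.star_mem _ hxM) _ _ (fun i _ => huM _)]
      apply Finset.sum_eq_zero
      intro i _
      by_cases hgi : g i ∈ Hgp
      · rw [hsxb _ (aux_subset_vNgen _ ⟨g i, hgi, rfl⟩), mul_zero]
      · have hc : c0 i - c i = 0 := by rw [hcdef]; simp [hgi]
        rw [hc, zero_mul]
    have hy0d : τ (star y0 * (y0 - y)) = τ (star (y0 - y) * (y0 - y)) := by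
      rw [hdsum, hy0def,
        aux_tau_inner hMvn hτ hu1 humul hustar huM htau0 Finset.univ Finset.univ
          c0 (fun j => c0 j - c j) g g,
        aux_tau_inner hMvn hτ hu1 humul hustar huM htau0 Finset.univ Finset.univ
          (fun j => c0 j - c j) (fun j => c0 j - c j) g g]
      apply Finset.sum_congr rfl; intro i _
      apply Finset.sum_congr rfl; intro j _
      by_cases hij : g i = g j
      · rw [if_pos hij]
        by_cases hj : g j ∈ Hgp
        · have hgiH : g i ∈ Hgp := by rw [hij]; exact hj
          have hci : c i = 0 := by rw [hcdef]; simp [hgiH]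
          rw [hci, sub_zero]
        · have hcj : c j = c0 j := by rw [hcdef]; simp [hj]
          rw [hcj, sub_self]; ring
      · rw [if_neg hij]; ring
    have hproj : norm2 τ (x - y) ≤ norm2 τ (x - y0) := by
      have hsplit : x - y = (x - y0) + (y0 - y) := by abel
      have hexp : τ (star (x - y) * (x - y))
          = (τ (star (x - y0) * (x - y0)) + τ (star (x - y0) * (y0 - y)))
            + (τ (star (y0 - y) * (x - y0)) + τ (star (y0 - y) * (y0 - y))) := by
        rw [hsplit, star_add, add_mul, mul_add, mul_add,
          hτ.map_add _ (hMvn.add_mem _ (hMvn.mul_mem _ (hMvn.star_mem _ haM) _ haM) _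
              (hMvn.mul_mem _ (hMvn.star_mem _ haM) _ hdM)) _
            (hMvn.add_mem _ (hMvn.mul_mem _ (hMvn.star_mem _ hdM) _ haM) _
              (hMvn.mul_mem _ (hMvn.star_mem _ hdM) _ hdM)),
          hτ.map_add _ (hMvn.mul_mem _ (hMvn.star_mem _ haM) _ haM) _
            (hMvn.mul_mem _ (hMvn.star_mem _ haM) _ hdM),
          hτ.map_add _ (hMvn.mul_mem _ (hMvn.star_mem _ hdM) _ haM) _
            (hMvn.mul_mem _ (hMvn.star_mem _ hdM) _ hdM)]
      have had : τ (star (x - y0) * (y0 - y)) = - τ (star (y0 - y) * (y0 - y)) := by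
        have hsm : star (x - y0) * (y0 - y) = star x * (y0 - y) - star y0 * (y0 - y) := by
          rw [star_sub, sub_mul]
        rw [hsm, auxT_sub hMvn hτ (hMvn.mul_mem _ (hMvn.star_mem _ hxM) _ hdM)
            (hMvn.mul_mem _ (hMvn.star_mem _ hy0M) _ hdM), hxd, hy0d]
        ring
      have hda : τ (star (y0 - y) * (x - y0)) = - τ (star (y0 - y) * (y0 - y)) := by
        have h := auxT_conj_sym hMvn hτ haM hdM
        rw [had, map_neg] at h
        rw [h, Complex.conj_eq_iff_im.mpr (aux_im_zero hτ hdM)]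
      have hre : (τ (star (x - y) * (x - y))).re ≤ (τ (star (x - y0) * (x - y0))).re := by
        rw [hexp, had, hda]
        have hQre : 0 ≤ (τ (star (y0 - y) * (y0 - y))).re := aux_re_nonneg hτ hdM
        simp only [Complex.add_re, Complex.neg_re]
        linarith
      exact Real.sqrt_le_sqrt hre
    have hxy : norm2 τ (x - y) < ε := lt_of_le_of_lt hproj hy0
    -- property (P)
    set T : Finset G := ((Finset.univ.filter (fun i => g i ∉ Hgp)).image g) ∪
        ((Finset.univ.filter (fun i => g i ∉ Hgp)).image (fun i => (g i)⁻¹)) with hTdef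
    have hT : ∀ a ∈ T, a ∉ Hgp := by
      intro a ha
      rw [hTdef] at ha
      rcases Finset.mem_union.mp ha with h | h
      · obtain ⟨i, hi, rfl⟩ := Finset.mem_image.mp h
        exact (Finset.mem_filter.mp hi).2
      · obtain ⟨i, hi, rfl⟩ := Finset.mem_image.mp h
        intro hmem
        exact (Finset.mem_filter.mp hi).2 (by simpa using inv_mem hmem)
    obtain ⟨f, hfF, hPf⟩ := hP T hT
    have hwLF' : v * u f * star v ∈ vNgen (u '' (F : Set G)) := hwLF f hfF
    have hwM : v * u f * star v ∈ M := hLH_M (hLF_LH hwLF')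
    set K := ∑ i, ‖c i‖ with hKdef
    have hK0 : 0 ≤ K := Finset.sum_nonneg (fun i _ => norm_nonneg _)
    have h1K : (0 : ℝ) < 1 + K := by linarith
    have hε2 : 0 < ε / (1 + K) := div_pos hε h1K
    obtain ⟨m, d0, fj, hfjF, hzlt⟩ := hdenseF _ hwLF' (ε / (1 + K)) hε2
    set z : H →L[ℂ] H := ∑ j, d0 j • u (fj j) with hzdef
    have hzM : z ∈ M := auxM_sum hMvn _ _ (fun j _ => hMvn.smul_mem _ _ (huM _))
    set w : H →L[ℂ] H := v * u f * star v with hwdef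
    have hwzM : w - z ∈ M := auxM_sub hMvn hwM hzM
    have hT0 : τ (star (w * x) * (x * u f)) = τ (star x * x) := by
      rw [hwdef, ← stepA f hfF]
      exact auxT_mul_unitary_self hMvn hτ hxM (huM f) (huU f).2
    have hwxM : w * x ∈ M := hMvn.mul_mem _ hwM _ hxM
    have hwyM : w * y ∈ M := hMvn.mul_mem _ hwM _ hyM
    have hxufM : x * u f ∈ M := hMvn.mul_mem _ hxM _ (huM f)
    have hyufM : y * u f ∈ M := hMvn.mul_mem _ hyM _ (huM f)
    have hzyM : z * y ∈ M := hMvn.mul_mem _ hzM _ hyM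
    have hnxuf : norm2 τ (x * u f) = norm2 τ x :=
      aux_norm2_mul_unitary hMvn hτ hxM (huM f) (huU f).2
    have hnwxy : norm2 τ (w * (x - y)) = norm2 τ (x - y) := aux_norm2_unitary_mul (hsww f)
    have hnwy : norm2 τ (w * y) = norm2 τ y := aux_norm2_unitary_mul (hsww f)
    have hnxyuf : norm2 τ ((x - y) * u f) = norm2 τ (x - y) :=
      aux_norm2_mul_unitary hMvn hτ hxyM (huM f) (huU f).2
    have hnyuf : norm2 τ (y * u f) = norm2 τ y :=
      aux_norm2_mul_unitary hMvn hτ hyM (huM f) (huU f).2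
    have hny : norm2 τ y ≤ norm2 τ x + ε := by
      have h1 : y = x + (y - x) := by abel
      have h2 : norm2 τ (y - x) = norm2 τ (x - y) := by
        rw [show y - x = -(x - y) by abel, aux_norm2_neg hMvn hτ hxyM]
      calc norm2 τ y = norm2 τ (x + (y - x)) := by rw [← h1]
        _ ≤ norm2 τ x + norm2 τ (y - x) :=
            aux_norm2_triangle hMvn hτ hxM (auxM_sub hMvn hyM hxM)
        _ ≤ norm2 τ x + ε := by rw [h2]; linarith
    have est1 : ‖τ (star (w * x) * (x * u f)) - τ (star (w * y) * (x * u f))‖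
        ≤ ε * norm2 τ x := by
      have hdiff : τ (star (w * x) * (x * u f)) - τ (star (w * y) * (x * u f))
          = τ (star (w * (x - y)) * (x * u f)) := by
        rw [mul_sub w x y, star_sub (w * x) (w * y),
          sub_mul (star (w * x)) (star (w * y)) (x * u f),
          auxT_sub hMvn hτ (hMvn.mul_mem _ (hMvn.star_mem _ hwxM) _ hxufM)
            (hMvn.mul_mem _ (hMvn.star_mem _ hwyM) _ hxufM)]
      rw [hdiff]
      calc ‖τ (star (w * (x - y)) * (x * u f))‖
          ≤ norm2 τ (w * (x - y)) * norm2 τ (x * u f) :=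
            auxT_cs hMvn hτ (hMvn.mul_mem _ hwM _ hxyM) hxufM
        _ = norm2 τ (x - y) * norm2 τ x := by rw [hnwxy, hnxuf]
        _ ≤ ε * norm2 τ x := mul_le_mul_of_nonneg_right hxy.le hδ0
    have est2 : ‖τ (star (w * y) * (x * u f)) - τ (star (w * y) * (y * u f))‖
        ≤ (norm2 τ x + ε) * ε := by
      have hdiff : τ (star (w * y) * (x * u f)) - τ (star (w * y) * (y * u f))
          = τ (star (w * y) * ((x - y) * u f)) := by
        rw [sub_mul x y (u f), mul_sub (star (w * y)) (x * u f) (y * u f),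
          auxT_sub hMvn hτ (hMvn.mul_mem _ (hMvn.star_mem _ hwyM) _ hxufM)
            (hMvn.mul_mem _ (hMvn.star_mem _ hwyM) _ hyufM)]
      rw [hdiff]
      calc ‖τ (star (w * y) * ((x - y) * u f))‖
          ≤ norm2 τ (w * y) * norm2 τ ((x - y) * u f) :=
            auxT_cs hMvn hτ hwyM (hMvn.mul_mem _ hxyM _ (huM f))
        _ = norm2 τ y * norm2 τ (x - y) := by rw [hnwy, hnxyuf]
        _ ≤ (norm2 τ x + ε) * ε :=
            mul_le_mul hny hxy.le aux_norm2_nonneg (by linarith)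
    have hKest : norm2 τ ((w - z) * y) ≤ K * (ε / (1 + K)) := by
      have hwzsum : (w - z) * y = ∑ i, c i • ((w - z) * u (g i)) := by
        rw [hydef, Finset.mul_sum]
        exact Finset.sum_congr rfl (fun i _ => mul_smul_comm _ _ _)
      calc norm2 τ ((w - z) * y) = norm2 τ (∑ i, c i • ((w - z) * u (g i))) := by rw [hwzsum]
        _ ≤ ∑ i, norm2 τ (c i • ((w - z) * u (g i))) :=
            aux_norm2_sum_le hMvn hτ _ _
              (fun i _ => hMvn.smul_mem _ _ (hMvn.mul_mem _ hwzM _ (huM _)))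
        _ = ∑ i, ‖c i‖ * norm2 τ ((w - z) * u (g i)) :=
            Finset.sum_congr rfl
              (fun i _ => aux_norm2_smul hMvn hτ _ (hMvn.mul_mem _ hwzM _ (huM _)))
        _ = ∑ i, ‖c i‖ * norm2 τ (w - z) := by
            apply Finset.sum_congr rfl; intro i _
            rw [aux_norm2_mul_unitary hMvn hτ hwzM (huM _) (huU _).2]
        _ ≤ ∑ i, ‖c i‖ * (ε / (1 + K)) := by
            apply Finset.sum_le_sum
            intro i _
            apply mul_le_mul_of_nonneg_left _ (norm_nonneg _)
            rw [hwdef, hzdef]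
            exact hzlt.le
        _ = K * (ε / (1 + K)) := by rw [hKdef, ← Finset.sum_mul]
    have hKe : K * (ε / (1 + K)) ≤ ε := by
      rw [← mul_div_assoc, div_le_iff₀ h1K]
      nlinarith
    have est3 : ‖τ (star (w * y) * (y * u f)) - τ (star (z * y) * (y * u f))‖
        ≤ ε * (norm2 τ x + ε) := by
      have hdiff : τ (star (w * y) * (y * u f)) - τ (star (z * y) * (y * u f))
          = τ (star ((w - z) * y) * (y * u f)) := by
        rw [sub_mul w z y, star_sub (w * y) (z * y),
          sub_mul (star (w * y)) (star (z * y)) (y * u f),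
          auxT_sub hMvn hτ (hMvn.mul_mem _ (hMvn.star_mem _ hwyM) _ hyufM)
            (hMvn.mul_mem _ (hMvn.star_mem _ hzyM) _ hyufM)]
      rw [hdiff]
      calc ‖τ (star ((w - z) * y) * (y * u f))‖
          ≤ norm2 τ ((w - z) * y) * norm2 τ (y * u f) :=
            auxT_cs hMvn hτ (hMvn.mul_mem _ hwzM _ hyM) hyufM
        _ = norm2 τ ((w - z) * y) * norm2 τ y := by rw [hnyuf]
        _ ≤ ε * (norm2 τ x + ε) :=
            mul_le_mul (hKest.trans hKe) hny aux_norm2_nonneg (by linarith)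
    have hzy : z * y = ∑ p ∈ Finset.univ ×ˢ Finset.univ,
        (d0 p.1 * c p.2) • u (fj p.1 * g p.2) := by
      rw [hzdef, hydef, Finset.sum_mul_sum, ← Finset.sum_product']
      apply Finset.sum_congr rfl; intro p _
      rw [aux_smul_mul_smul, humul]
    have hyuf : y * u f = ∑ k, c k • u (g k * f) := by
      rw [hydef, Finset.sum_mul]
      apply Finset.sum_congr rfl; intro k _
      rw [smul_mul_assoc, humul]
    have hT3 : τ (star (z * y) * (y * u f)) = 0 := by
      rw [hzy, hyuf, aux_tau_inner hMvn hτ hu1 humul hustar huM htau0]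
      apply Finset.sum_eq_zero; intro p _
      apply Finset.sum_eq_zero; intro k _
      by_cases h1 : c p.2 = 0
      · rw [h1]; simp
      by_cases h2 : c k = 0
      · rw [h2]; simp
      have hgp2 : g p.2 ∉ Hgp := by
        intro hmem; apply h1; rw [hcdef]; simp [hmem]
      have hgk : g k ∉ Hgp := by
        intro hmem; apply h2; rw [hcdef]; simp [hmem]
      have hne : ¬ (fj p.1 * g p.2 = g k * f) := by
        intro heq
        have hfj : fj p.1 = g k * f * (g p.2)⁻¹ := by
          rw [← heq, mul_inv_cancel_right]
        have hgkT : g k ∈ T := by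
          rw [hTdef]
          exact Finset.mem_union_left _ (Finset.mem_image.mpr
            ⟨k, Finset.mem_filter.mpr ⟨Finset.mem_univ k, hgk⟩, rfl⟩)
        have hgp2T : (g p.2)⁻¹ ∈ T := by
          rw [hTdef]
          exact Finset.mem_union_right _ (Finset.mem_image.mpr
            ⟨p.2, Finset.mem_filter.mpr ⟨Finset.mem_univ _, hgp2⟩, rfl⟩)
        exact hPf (g k) hgkT ((g p.2)⁻¹) hgp2T (hfj ▸ hfjF p.1)
      rw [if_neg hne, mul_zero]
    -- assemble
    have hsplitT : τ (star (w * x) * (x * u f))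
        = (τ (star (w * x) * (x * u f)) - τ (star (w * y) * (x * u f)))
          + ((τ (star (w * y) * (x * u f)) - τ (star (w * y) * (y * u f)))
            + (τ (star (w * y) * (y * u f)) - τ (star (z * y) * (y * u f)))) := by
      rw [hT3]; ring
    have habs : (τ (star x * x)).re
        ≤ ε * norm2 τ x + ((norm2 τ x + ε) * ε + ε * (norm2 τ x + ε)) := by
      calc (τ (star x * x)).re = (τ (star (w * x) * (x * u f))).re := by rw [hT0]
        _ ≤ ‖τ (star (w * x) * (x * u f))‖ := Complex.re_le_norm _
        _ ≤ ε * norm2 τ x + ((norm2 τ x + ε) * ε + ε * (norm2 τ x + ε)) := by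
            rw [hsplitT]
            refine le_trans (norm_add_le _ _) ?_
            refine add_le_add est1 ?_
            refine le_trans (norm_add_le _ _) ?_
            exact add_le_add est2 est3
    have harith : ε * norm2 τ x + ((norm2 τ x + ε) * ε + ε * (norm2 τ x + ε))
        ≤ ε * (3 * norm2 τ x + 2) := by
      have hsq : ε * ε ≤ ε := mul_le_of_le_one_right hε.le hε1
      nlinarith [hsq, hδ0, hε.le]
    linarith
  -- conclude
  have hDnn : 0 ≤ (τ (star x * x)).re := aux_re_nonneg hτ hxM
  have hD0 : (τ (star x * x)).re = 0 := by
    by_contra hne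
    have hpos : 0 < (τ (star x * x)).re := lt_of_le_of_ne hDnn (Ne.symm hne)
    have h3δ : (0 : ℝ) < 2 * (3 * norm2 τ x + 2) := by nlinarith
    have hεp : 0 < min 1 ((τ (star x * x)).re / (2 * (3 * norm2 τ x + 2))) :=
      lt_min one_pos (div_pos hpos h3δ)
    have hkey := key _ hεp (min_le_left _ _)
    have hle : min 1 ((τ (star x * x)).re / (2 * (3 * norm2 τ x + 2))) * (3 * norm2 τ x + 2)
        ≤ (τ (star x * x)).re / 2 := by
      calc min 1 ((τ (star x * x)).re / (2 * (3 * norm2 τ x + 2))) * (3 * norm2 τ x + 2)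
          ≤ ((τ (star x * x)).re / (2 * (3 * norm2 τ x + 2))) * (3 * norm2 τ x + 2) :=
            mul_le_mul_of_nonneg_right (min_le_right _ _) (by nlinarith)
        _ = (τ (star x * x)).re / 2 := by field_simp
    linarith
  have hx0 : x = 0 := hτ.faithful _ hxM
    (Complex.ext (by simpa using hD0) (by simpa using aux_im_zero hτ hxM))
  have hveq : v = EH v := by
    have h := hx0
    rw [hxdef] at h
    exact sub_eq_zero.mp h
  rw [hveq]
  exact hEvLH

end MainLemma

/-- If `F ≤ H ≤ G` satisfy property (P) and `F` is normal in `H`,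
then `N_M(L(F))'' = L(H)` inside `M = L(G)`. -/
theorem group_normalizing_algebra_eq
    {H : Type*} [NormedAddCommGroup H] [InnerProductSpace ℂ H] [CompleteSpace H]
    {G : Type*} [Group G] (F Hgp : Subgroup G) (hFH : F ≤ Hgp)
    -- `F` is normal in `H`
    (hnormal : ∀ h ∈ Hgp, ∀ f ∈ F, h * f * h⁻¹ ∈ F)
    -- property (P)
    (hP : ∀ S : Finset G, (∀ g ∈ S, g ∉ Hgp) →
      ∃ f ∈ F, ∀ g ∈ S, ∀ h ∈ S, g * f * h ∉ F)
    (M : Set (H →L[ℂ] H)) (τ : (H →L[ℂ] H) → ℂ) (u : G → (H →L[ℂ] H))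
    (hMvn : IsVonNeumannAlgebra M) (hτ : IsFaithfulTracialState M τ)
    (hu1 : u 1 = 1) (humul : ∀ g h : G, u (g * h) = u g * u h)
    (hustar : ∀ g : G, star (u g) = u g⁻¹)
    (huM : ∀ g : G, u g ∈ M) (huU : ∀ g : G, IsUnitary (u g))
    (htau0 : ∀ g : G, g ≠ 1 → τ (u g) = 0)
    (hgen : M = vNgen (Set.range u))
    -- `‖·‖₂`-density of finite linear combinations of group unitaries
    (hdenseM : ∀ x ∈ M, ∀ ε : ℝ, 0 < ε → ∃ (n : ℕ) (c : Fin n → ℂ) (g : Fin n → G),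
      norm2 τ (x - ∑ i, c i • u (g i)) < ε)
    (hdenseH : ∀ x ∈ vNgen (u '' (Hgp : Set G)), ∀ ε : ℝ, 0 < ε →
      ∃ (n : ℕ) (c : Fin n → ℂ) (g : Fin n → G), (∀ i, g i ∈ Hgp) ∧
        norm2 τ (x - ∑ i, c i • u (g i)) < ε)
    (hdenseF : ∀ x ∈ vNgen (u '' (F : Set G)), ∀ ε : ℝ, 0 < ε →
      ∃ (n : ℕ) (c : Fin n → ℂ) (g : Fin n → G), (∀ i, g i ∈ F) ∧
        norm2 τ (x - ∑ i, c i • u (g i)) < ε)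
    (EF EH : (H →L[ℂ] H) → (H →L[ℂ] H))
    (hEF : IsCondExp M (vNgen (u '' (F : Set G))) τ EF)
    (hEH : IsCondExp M (vNgen (u '' (Hgp : Set G))) τ EH) :
    normAlg M (vNgen (u '' (F : Set G))) = vNgen (u '' (Hgp : Set G)) := by
  apply subset_antisymm
  · -- the normalizing algebra is contained in L(H)
    show vNgen (normalizerSet M (vNgen (u '' (F : Set G)))) ⊆ vNgen (u '' (Hgp : Set G))
    apply aux_vNgen_le
    intro v hv
    exact aux_normalizer_mem F Hgp hFH hP M τ u hMvn hτ hu1 humul hustar huM huU htau0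
      hgen hdenseM hdenseF EH hEH hv
  · -- L(H) is contained in the normalizing algebra
    show vNgen (u '' (Hgp : Set G)) ⊆ vNgen (normalizerSet M (vNgen (u '' (F : Set G))))
    apply aux_vNgen_le
    intro w hw
    obtain ⟨h, hh, rfl⟩ := hw
    refine aux_subset_vNgen _ ⟨huM h, huU h, ?_⟩
    rw [aux_conj_vNgen (huU h)]
    have himg : (fun a => u h * a * star (u h)) '' (u '' (F : Set G)) = u '' (F : Set G) := by
      apply subset_antisymm
      · rintro _ ⟨_, ⟨f, hf, rfl⟩, rfl⟩
        refine ⟨h * f * h⁻¹, hnormal h hh f hf, ?_⟩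
        dsimp only
        rw [humul, humul, hustar]
      · rintro _ ⟨f, hf, rfl⟩
        refine ⟨u (h⁻¹ * f * h), ⟨h⁻¹ * f * h, ?_, rfl⟩, ?_⟩
        · have hmemF := hnormal h⁻¹ (inv_mem hh) f hf
          simpa using hmemF
        · show u h * u (h⁻¹ * f * h) * star (u h) = u f
          rw [hustar, ← humul, ← humul]
          congr 1
          group
    rw [himg]
end
end

section
/- Let G be a group and let F ≤ H ≤ G be subgroups satisfying property (P): for every finite subset S ⊆ G∖H there exists f ∈ F such that gfh ∉ F for all g, h ∈ S. Then for any finitely many elements x₁,…,xₙ of the group algebra ℂ[G] there exists f ∈ F such that E_F(x_i · δ_f · x_j) = E_F(E_H(x_i) · δ_f · E_H(x_j)) for all i, j = 1,…,n. -/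
noncomputable section

open scoped Classical Pointwise

/-- The linear cut-off map `E_K : ℂ[G] → ℂ[G]` keeping only coefficients at elements of the
subgroup `K` and setting the remaining coefficients to zero. -/
noncomputable def groupAlgCondExp {G : Type*} [Group G] (K : Subgroup G)
    (x : MonoidAlgebra ℂ G) : MonoidAlgebra ℂ G :=
  MonoidAlgebra.ofCoeff (Finsupp.filter (fun g => g ∈ K) x.coeff)

lemma groupAlgCondExp_add {G : Type*} [Group G] (K : Subgroup G)
    (x y : MonoidAlgebra ℂ G) :
    groupAlgCondExp K (x + y) = groupAlgCondExp K x + groupAlgCondExp K y := by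
  unfold groupAlgCondExp; rw [MonoidAlgebra.coeff_add, Finsupp.filter_add]; rfl

lemma groupAlgCondExp_eq_zero {G : Type*} [Group G] (K : Subgroup G)
    (x : MonoidAlgebra ℂ G) (h : ∀ g ∈ x.coeff.support, (g : G) ∉ K) :
    groupAlgCondExp K x = 0 := by
  ext a
  simp only [groupAlgCondExp, MonoidAlgebra.coeff_ofCoeff, MonoidAlgebra.coeff_zero, Finsupp.filter_apply, Finsupp.coe_zero, Pi.zero_apply]
  split_ifs with ha
  · by_contra hne
    exact h a (Finsupp.mem_support_iff.2 hne) ha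
  · rfl

lemma condExp_triple_zero {G : Type*} [Group G] (F : Subgroup G) (f : G)
    (y z : MonoidAlgebra ℂ G)
    (h : ∀ g ∈ y.coeff.support, ∀ k ∈ z.coeff.support, g * f * k ∉ F) :
    groupAlgCondExp F (y * MonoidAlgebra.single f 1 * z) = 0 := by
  apply groupAlgCondExp_eq_zero
  intro a ha
  have h1 : a ∈ (y * MonoidAlgebra.single f 1).coeff.support * z.coeff.support := by
    have := MonoidAlgebra.support_coeff_mul_subset (y * MonoidAlgebra.single f 1) z
    exact this ha
  rw [Finset.mem_mul] at h1
  obtain ⟨b, hb, c, hc, rfl⟩ := h1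
  have h2 : b ∈ y.coeff.support * (MonoidAlgebra.single f (1:ℂ)).coeff.support :=
    MonoidAlgebra.support_coeff_mul_subset y _ hb
  rw [Finset.mem_mul] at h2
  obtain ⟨g, hg, d, hd, rfl⟩ := h2
  have hdf : d = f := by
    have := Finsupp.support_single_subset hd
    simpa using this
  subst hdf
  exact h g hg c hc

/-- If `F ≤ H ≤ G` satisfy property (P), then for any finitely many
elements `x₁, …, xₙ` of `ℂ[G]` there is `f ∈ F` with
`E_F(xᵢ δ_f xⱼ) = E_F(E_H(xᵢ) δ_f E_H(xⱼ))` for all `i, j`. -/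
theorem groupAlgebra_relative_WAHP_core
    {G : Type*} [Group G] (F Hgp : Subgroup G) (hFH : F ≤ Hgp)
    -- property (P)
    (hP : ∀ S : Finset G, (∀ g ∈ S, g ∉ Hgp) →
      ∃ f ∈ F, ∀ g ∈ S, ∀ h ∈ S, g * f * h ∉ F)
    (n : ℕ) (x : Fin n → MonoidAlgebra ℂ G) :
    ∃ f ∈ F, ∀ i j : Fin n,
      groupAlgCondExp F (x i * MonoidAlgebra.single f 1 * x j)
        = groupAlgCondExp F
            (groupAlgCondExp Hgp (x i) * MonoidAlgebra.single f 1
              * groupAlgCondExp Hgp (x j)) := by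
  set S : Finset G :=
    Finset.univ.biUnion (fun i : Fin n => (x i).coeff.support.filter (fun g => g ∉ Hgp)) with hS
  have hSnot : ∀ g ∈ S, g ∉ Hgp := by
    intro g hg
    simp only [hS, Finset.mem_biUnion, Finset.mem_filter] at hg
    obtain ⟨i, -, -, h⟩ := hg
    exact h
  obtain ⟨f, hfF, hf⟩ := hP S hSnot
  refine ⟨f, hfF, fun i j => ?_⟩
  set a : Fin n → MonoidAlgebra ℂ G := fun i => groupAlgCondExp Hgp (x i) with ha
  set b : Fin n → MonoidAlgebra ℂ G :=
    fun i => MonoidAlgebra.ofCoeff (Finsupp.filter (fun g => ¬ g ∈ Hgp) (x i).coeff) with hb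
  have hsplit : ∀ i, x i = a i + b i := by
    intro i
    exact MonoidAlgebra.coeff_injective (Finsupp.filter_pos_add_filter_neg (x i).coeff _).symm
  have hamem : ∀ i, ∀ g ∈ (a i).coeff.support, g ∈ Hgp := by
    intro i g hg
    have hg0 : g ∈ (Finsupp.filter (fun g => g ∈ Hgp) (x i).coeff).support := hg
    have := Finsupp.support_filter (p := fun g => g ∈ Hgp) (f := (x i).coeff) ▸ hg0
    exact (Finset.mem_filter.1 this).2
  have hbmem : ∀ i, ∀ g ∈ (b i).coeff.support, g ∈ S := by
    intro i g hg
    have hg0 : g ∈ (Finsupp.filter (fun g => ¬ g ∈ Hgp) (x i).coeff).support := hg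
    have hg' := Finsupp.support_filter (p := fun g => ¬ g ∈ Hgp) (f := (x i).coeff) ▸ hg0
    rw [Finset.mem_filter] at hg'
    simp only [hS, Finset.mem_biUnion, Finset.mem_filter]
    exact ⟨i, Finset.mem_univ i, hg'.1, hg'.2⟩
  -- the three vanishing cross terms
  have hab : groupAlgCondExp F (a i * MonoidAlgebra.single f 1 * b j) = 0 := by
    apply condExp_triple_zero
    intro g hg k hk hFk
    have hgH := hamem i g hg
    have : k = f⁻¹ * g⁻¹ * (g * f * k) := by group
    have hkH : k ∈ Hgp := by
      rw [this]
      exact mul_mem (mul_mem (inv_mem (hFH hfF)) (inv_mem hgH)) (hFH hFk)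
    exact hSnot k (hbmem j k hk) hkH
  have hba : groupAlgCondExp F (b i * MonoidAlgebra.single f 1 * a j) = 0 := by
    apply condExp_triple_zero
    intro g hg k hk hFk
    have hkH := hamem j k hk
    have : g = (g * f * k) * k⁻¹ * f⁻¹ := by group
    have hgH : g ∈ Hgp := by
      rw [this]
      exact mul_mem (mul_mem (hFH hFk) (inv_mem hkH)) (inv_mem (hFH hfF))
    exact hSnot g (hbmem i g hg) hgH
  have hbb : groupAlgCondExp F (b i * MonoidAlgebra.single f 1 * b j) = 0 := by
    apply condExp_triple_zero
    intro g hg k hk hFk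
    exact hf g (hbmem i g hg) k (hbmem j k hk) hFk
  calc groupAlgCondExp F (x i * MonoidAlgebra.single f 1 * x j)
      = groupAlgCondExp F ((a i + b i) * MonoidAlgebra.single f 1 * (a j + b j)) := by
        rw [← hsplit, ← hsplit]
    _ = groupAlgCondExp F (a i * MonoidAlgebra.single f 1 * a j) := by
        rw [add_mul, add_mul, mul_add, mul_add]
        rw [groupAlgCondExp_add, groupAlgCondExp_add, groupAlgCondExp_add,
          hab, hba, hbb]
        abel
end
end

section
/- Let M be a unital C*-algebra, let w ∈ M satisfy w w* w = w, and set e := w* w. Let p, q ∈ M be projections (self-adjoint idempotents) such that e p = p e and w* q w = e p. Then w w* commutes with q: (w w*) q = q (w w*). -/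
/-! With `f := w w*` a projection, the hypotheses give `f q f = w (w* q w) w* = w p w*`, which is
idempotent because `p` commutes with `w* w`. For projections `f, q`, idempotence of `f q f` forces
`x := q f - f q f` to satisfy `x* x = f q f - (f q f)² = 0`, so `q f = f q f` and, taking adjoints,
`f q = f q f` as well. -/

theorem isStarProjection_mul_star_self_of_mul_star_mul_self {R : Type*} [Semigroup R] [StarMul R]
    {w : R} (hw : w * star w * w = w) : IsStarProjection (w * star w) where
  isIdempotentElem := by rw [IsIdempotentElem, ← mul_assoc, hw]
  isSelfAdjoint := by simp only [IsSelfAdjoint, star_mul, star_star]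

theorem isIdempotentElem_mul_mul_star_of_commute {R : Type*} [Semigroup R] [Star R] {w p : R}
    (hw : w * star w * w = w) (hp : IsIdempotentElem p) (hwp : Commute (star w * w) p) :
    IsIdempotentElem (w * p * star w) :=
  calc w * p * star w * (w * p * star w) = w * (p * (star w * w) * p) * star w := by
        simp only [mul_assoc]
    _ = w * star w * w * (p * p) * star w := by rw [← hwp.eq]; simp only [mul_assoc]
    _ = w * p * star w := by rw [hw, hp.eq]

theorem IsStarProjection.commute_of_isIdempotentElem_mul_mul {E : Type*} [NonUnitalNormedRing E]
    [StarRing E] [CStarRing E] {f q : E} (hf : IsStarProjection f) (hq : IsStarProjection q)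
    (hfqf : IsIdempotentElem (f * q * f)) : Commute f q := by
  have hf_star := hf.isSelfAdjoint.star_eq
  have hq_star := hq.isSelfAdjoint.star_eq
  have hx : star (q * f - f * q * f) * (q * f - f * q * f) =
      f * q * f - f * q * f * (f * q * f) := by
    simp only [star_sub, star_mul, hf_star, hq_star, sub_mul, mul_sub, mul_assoc]
    simp only [← mul_assoc f f, hf.isIdempotentElem.eq, ← mul_assoc q q, hq.isIdempotentElem.eq]
    abel
  have hqf : q * f = f * q * f := by
    rw [← sub_eq_zero, ← CStarRing.star_mul_self_eq_zero_iff, hx, hfqf.eq, sub_self]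
  have hfq : f * q = f * q * f := by
    simpa only [star_mul, hf_star, hq_star, mul_assoc] using congrArg star hqf
  rw [Commute, SemiconjBy, hfq, hqf]

theorem partial_isometry_range_projection_commutes_general
    {M : Type*} [NormedRing M] [StarRing M] [CStarRing M]
    (w p q : M)
    (hw : w * star w * w = w)
    (hp2 : p * p = p)
    (hq : star q = q) (hq2 : q * q = q)
    (hep : (star w * w) * p = p * (star w * w))
    (hqwp : star w * q * w = (star w * w) * p) :
    (w * star w) * q = q * (w * star w) := by
  have hsandwich : w * star w * q * (w * star w) = w * p * star w :=
    calc w * star w * q * (w * star w) = w * (star w * q * w) * star w := by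
          simp only [mul_assoc]
      _ = w * star w * w * p * star w := by rw [hqwp]; simp only [mul_assoc]
      _ = w * p * star w := by rw [hw]
  have hfqf : IsIdempotentElem (w * star w * q * (w * star w)) := by
    rw [hsandwich]
    exact isIdempotentElem_mul_mul_star_of_commute hw hp2 hep
  exact (isStarProjection_mul_star_self_of_mul_star_mul_self hw).commute_of_isIdempotentElem_mul_mul
    ⟨hq2, hq⟩ hfqf

/-- In a unital C*-algebra, if `w` is a partial isometry with
`e := w*w`, and `p`, `q` are projections with `e p = p e` and `w* q w = e p`,
then `w w*` commutes with `q`. -/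
theorem partial_isometry_range_projection_commutes
    {M : Type*} [NormedRing M] [StarRing M] [CStarRing M] [CompleteSpace M]
    [NormedAlgebra ℂ M] [StarModule ℂ M]
    (w p q : M)
    (hw : w * star w * w = w)
    (hp : star p = p) (hp2 : p * p = p)
    (hq : star q = q) (hq2 : q * q = q)
    (hep : (star w * w) * p = p * (star w * w))
    (hqwp : star w * q * w = (star w * w) * p) :
    (w * star w) * q = q * (w * star w) :=
  partial_isometry_range_projection_commutes_general w p q hw hp2 hq hq2 hep hqwp
end
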